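/- arXiv:1510.01282 — 8 statements merged into one kernel-verified Lean document; each statement's English description precedes it below -/
import Mathlib

section
/- Let X, G ∈ B^+(H) and let M ∈ B^+(H) be a nonnegative contraction (0 ≤ M ≤ I) with ran M contained in the closure of ran(X+G) such that X = (X+G)^{1/2} M (X+G)^{1/2} and G = (X+G)^{1/2} (I − M) (X+G)^{1/2}. Then the parallel sum satisfies X:G = (X+G)^{1/2} (M − M²) (X+G)^{1/2}. -/
open Filter Topology

variable {H : Type*} [NormedAddCommGroup H] [InnerProductSpace ℂ H] [CompleteSpace H]

/-- `P` is the parallel sum `X : G` of `X` and `G`. -/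
def IsParallelSum (X G P : H →L[ℂ] H) : Prop :=
  P.IsPositive ∧ ∀ h : H,
    IsGLB {r : ℝ | ∃ f g : H, f + g = h ∧
        r = (inner ℂ (X f) f : ℂ).re + (inner ℂ (G g) g : ℂ).re}
      ((inner ℂ (P h) h : ℂ).re)

/-- `S` is the (unique) nonnegative square root of `X`. -/
def IsSqrtOf (S X : H →L[ℂ] H) : Prop := S.IsPositive ∧ S * S = X

/-- The orbit of `F 0` under the map `μ_G : X ↦ X - X:G`. -/
def IsMuOrbit (G : H →L[ℂ] H) (F : ℕ → H →L[ℂ] H) : Prop :=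
  ∀ n : ℕ, ∃ P : H →L[ℂ] H, IsParallelSum (F n) G P ∧ F (n + 1) = F n - P

/-- `L = τ_G(X)` : the strong limit of the iterates `μ_G^[n](X)`. -/
def IsTau (G X L : H →L[ℂ] H) : Prop :=
  ∃ F : ℕ → H →L[ℂ] H, F 0 = X ∧ IsMuOrbit G F ∧
    ∀ x : H, Tendsto (fun n => F n x) atTop (𝓝 (L x))

/-- `P` is the orthogonal projection of `H` onto the subspace `M`. -/
def IsOrthProjOnto (M : Submodule ℂ H) (P : H →L[ℂ] H) : Prop :=
  ∀ x : H, P x ∈ M ∧ x - P x ∈ Mᗮ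

/-! `X = S M S`, `G = S (1 - M) S` and `Q = S (M - M²) S` satisfy, for `f + g = h`,
`⟪X f, f⟫ + ⟪G g, g⟫ = ⟪Q h, h⟫ + ‖M S f - (1 - M) S g‖²`, so `⟪Q h, h⟫` is a lower bound of the
infimum defining `X : G`. Writing `S f = S h - S g`, the defect equals `‖M S h - S g‖`, which can be
made arbitrarily small because `ran M ⊆ clos ran S`. Hence `X : G` and `Q` have the same quadratic
form, and two symmetric operators with the same quadratic form coincide. -/

open RCLike
open scoped InnerProductSpace

namespace ContinuousLinearMap

variable {𝕜 E : Type*} [RCLike 𝕜] [NormedAddCommGroup E] [InnerProductSpace 𝕜 E]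

lemma isSymmetric_conjugate {S T : E →L[𝕜] E} (hS : (S : E →ₗ[𝕜] E).IsSymmetric)
    (hT : (T : E →ₗ[𝕜] E).IsSymmetric) : ((S * T * S : E →L[𝕜] E) : E →ₗ[𝕜] E).IsSymmetric :=
  fun _ _ => (hS _ _).trans ((hT _ _).trans (hS _ _))

lemma inner_conjugate_apply {S : E →L[𝕜] E} (hS : (S : E →ₗ[𝕜] E).IsSymmetric)
    (T : E →L[𝕜] E) (x : E) : ⟪(S * T * S) x, x⟫_𝕜 = ⟪T (S x), S x⟫_𝕜 :=
  hS (T (S x)) x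

lemma ext_of_re_inner_self {P Q : E →L[𝕜] E} (hP : (P : E →ₗ[𝕜] E).IsSymmetric)
    (hQ : (Q : E →ₗ[𝕜] E).IsSymmetric) (h : ∀ x, re ⟪P x, x⟫_𝕜 = re ⟪Q x, x⟫_𝕜) : P = Q := by
  refine coe_injective (sub_eq_zero.1 ((hP.sub hQ).inner_map_self_eq_zero.1 fun x => ?_))
  rw [LinearMap.sub_apply, inner_sub_left, ← hP.coe_re_inner_apply_self,
    ← hQ.coe_re_inner_apply_self]
  simp [h x]

lemma re_inner_apply_self_add_re_inner_one_sub_apply_self {M : E →L[𝕜] E}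
    (hM : (M : E →ₗ[𝕜] E).IsSymmetric) (u v : E) :
    re ⟪M u, u⟫_𝕜 + re ⟪(1 - M) v, v⟫_𝕜
      = re ⟪(M - M * M) (u + v), u + v⟫_𝕜 + ‖M u - (1 - M) v‖ ^ 2 := by
  have hM' : ∀ x y, ⟪M x, y⟫_𝕜 = ⟪x, M y⟫_𝕜 := hM
  have h : ⟪M u, u⟫_𝕜 + ⟪(1 - M) v, v⟫_𝕜
      = ⟪(M - M * M) (u + v), u + v⟫_𝕜 + ⟪M u - (1 - M) v, M u - (1 - M) v⟫_𝕜 := by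
    simp only [sub_apply, one_apply_eq_self, mul_apply_eq_comp, map_add, inner_sub_left,
      inner_sub_right, inner_add_left, inner_add_right, hM']
    ring
  rw [← inner_self_eq_norm_sq (𝕜 := 𝕜), ← map_add, ← map_add, h]

lemma isGLB_re_inner_conjugate {S M : E →L[𝕜] E} (hS : (S : E →ₗ[𝕜] E).IsSymmetric)
    (hM : (M : E →ₗ[𝕜] E).IsSymmetric) (hMS : Set.range M ⊆ closure (Set.range S)) (h : E) :
    IsGLB {r : ℝ | ∃ f g : E, f + g = h ∧
        r = re ⟪(S * M * S) f, f⟫_𝕜 + re ⟪(S * (1 - M) * S) g, g⟫_𝕜}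
      (re ⟪(S * (M - M * M) * S) h, h⟫_𝕜) := by
  have hdecomp : ∀ f g, re ⟪(S * M * S) f, f⟫_𝕜 + re ⟪(S * (1 - M) * S) g, g⟫_𝕜
      = re ⟪(S * (M - M * M) * S) (f + g), f + g⟫_𝕜 + ‖M (S f) - (1 - M) (S g)‖ ^ 2 := by
    intro f g
    rw [inner_conjugate_apply hS, inner_conjugate_apply hS, inner_conjugate_apply hS,
      map_add S]
    exact re_inner_apply_self_add_re_inner_one_sub_apply_self hM _ _
  refine ⟨?_, fun b hb => le_of_forall_pos_le_add fun ε hε => ?_⟩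
  · rintro _ ⟨f, g, rfl, rfl⟩
    rw [hdecomp]
    exact le_add_of_nonneg_right (sq_nonneg _)
  · obtain ⟨g, hg⟩ := Metric.mem_closure_range_iff.1 (hMS (Set.mem_range_self (S h)))
      (√ε) (Real.sqrt_pos.2 hε)
    have hdefect : M (S (h - g)) - (1 - M) (S g) = M (S h) - S g := by
      simp only [map_sub, sub_apply]
      abel
    calc b ≤ _ := hb ⟨h - g, g, sub_add_cancel h g, rfl⟩
      _ = re ⟪(S * (M - M * M) * S) h, h⟫_𝕜 + ‖M (S h) - S g‖ ^ 2 := by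
        rw [hdecomp, sub_add_cancel, hdefect]
      _ ≤ _ := by
        gcongr
        rw [← dist_eq_norm]
        exact ((Real.lt_sqrt dist_nonneg).1 hg).le

end ContinuousLinearMap

theorem stmt0_general (X G S M P : H →L[ℂ] H)
    (hS : IsSqrtOf S (X + G))
    (hM : M.IsPositive)
    (hMran : Set.range ⇑M ⊆ closure (Set.range ⇑(X + G)))
    (hXdec : X = S * M * S) (hGdec : G = S * (1 - M) * S)
    (hP : IsParallelSum X G P) :
    P = S * (M - M * M) * S := by
  obtain ⟨hSpos, hSS⟩ := hS
  have hMS : Set.range M ⊆ closure (Set.range S) :=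
    hMran.trans (closure_mono (hSS ▸ Set.range_comp_subset_range S S))
  have hQ := ContinuousLinearMap.isSymmetric_conjugate (T := M - M * M) hSpos.isSymmetric
    (hM.isSymmetric.sub (hM.isSymmetric.mul_of_commute hM.isSymmetric rfl))
  refine ContinuousLinearMap.ext_of_re_inner_self hP.1.isSymmetric hQ fun h =>
    (hP.2 h).unique ?_
  rw [hXdec, hGdec]
  exact ContinuousLinearMap.isGLB_re_inner_conjugate hSpos.isSymmetric hM.isSymmetric hMS h

/-- Lemma 1 of the paper. If `X = S M S` and `G = S (I - M) S`, where
`S = (X+G)^{1/2}` and `0 ≤ M ≤ I` with `ran M ⊆ clos ran (X+G)`, then the parallel sum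
satisfies `X : G = S (M - M²) S`. -/
theorem stmt0 (X G S M P : H →L[ℂ] H)
    (hX : X.IsPositive) (hG : G.IsPositive)
    (hS : IsSqrtOf S (X + G))
    (hM : M.IsPositive) (hM1 : (1 - M).IsPositive)
    (hMran : Set.range ⇑M ⊆ closure (Set.range ⇑(X + G)))
    (hXdec : X = S * M * S) (hGdec : G = S * (1 - M) * S)
    (hP : IsParallelSum X G P) :
    P = S * (M - M * M) * S :=
  stmt0_general X G S M P hS hM hMran hXdec hGdec hP
end

section
/- For all X, G ∈ B^+(H), the range of the square root of the parallel sum equals the intersection of the ranges of the square roots: ran (X:G)^{1/2} = ran X^{1/2} ∩ ran G^{1/2}. -/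
open Filter Topology

variable {H : Type*} [NormedAddCommGroup H] [InnerProductSpace ℂ H] [CompleteSpace H]

/-!
By Douglas' criterion, `x ∈ ran A^{1/2}` iff `|⟪x, h⟫|² ≤ c ⟪A h, h⟫` for some `c` and all `h`.
Taking `g = 0` or `f = 0` in the infimum defining `X:G` gives `X:G ≤ X` and `X:G ≤ G`, hence `⊆`.
Conversely, if `x` satisfies the criterion for `X` (constant `a`) and for `G` (constant `b`), then
for every splitting `h = f + g`,
`|⟪x, h⟫|² ≤ 2 (|⟪x, f⟫|² + |⟪x, g⟫|²) ≤ 2 (a + b) (⟪X f, f⟫ + ⟪G g, g⟫)`,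
and passing to the infimum gives the criterion for `X:G`.
-/

open scoped InnerProductSpace

theorem LinearMap.exists_comp_eq_of_ker_le {R M N P : Type*} [CommRing R] [AddCommGroup M]
    [Module R M] [AddCommGroup N] [Module R N] [AddCommGroup P] [Module R P]
    (f : M →ₗ[R] N) (hf : Function.Surjective f) (ψ : M →ₗ[R] P)
    (hker : LinearMap.ker f ≤ LinearMap.ker ψ) : ∃ g : N →ₗ[R] P, g ∘ₗ f = ψ :=
  ⟨(LinearMap.ker f).liftQ ψ hker ∘ₗ (f.quotKerEquivOfSurjective hf).symm.toLinearMap, by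
    ext x
    simp [quotKerEquivOfSurjective_symm_apply]⟩

section Douglas

variable {𝕜 E F : Type*} [RCLike 𝕜] [NormedAddCommGroup E] [InnerProductSpace 𝕜 E]
  [CompleteSpace E] [NormedAddCommGroup F] [InnerProductSpace 𝕜 F] [CompleteSpace F]

/- The functional `T h ↦ ⟪x, h⟫` is well defined and bounded on `range T`; a Hahn–Banach
extension of it to `F` is represented by some `z`, and then `T† z = x`. -/
theorem ContinuousLinearMap.mem_range_adjoint_iff (T : E →L[𝕜] F) (x : E) :
    x ∈ Set.range (ContinuousLinearMap.adjoint T) ↔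
      ∃ c > 0, ∀ h : E, ‖⟪x, h⟫_𝕜‖ ^ 2 ≤ c * ‖T h‖ ^ 2 := by
  constructor
  · rintro ⟨y, rfl⟩
    refine ⟨‖y‖ ^ 2 + 1, by positivity, fun h => ?_⟩
    rw [adjoint_inner_left]
    calc ‖⟪y, T h⟫_𝕜‖ ^ 2 ≤ (‖y‖ * ‖T h‖) ^ 2 := by gcongr; exact norm_inner_le_norm y (T h)
      _ ≤ (‖y‖ ^ 2 + 1) * ‖T h‖ ^ 2 := by nlinarith [sq_nonneg ‖T h‖]
  · rintro ⟨c, hc, hbound⟩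
    set R := (T : E →ₗ[𝕜] F).rangeRestrict
    obtain ⟨g₀, hg₀⟩ := LinearMap.exists_comp_eq_of_ker_le R (LinearMap.surjective_rangeRestrict _)
      (innerₛₗ 𝕜 x) fun h hh => by
        have hTh : T h = 0 := congrArg Subtype.val (LinearMap.mem_ker.mp hh)
        simpa [hTh] using hbound h
    have hg₀_apply (h : E) : g₀ (R h) = ⟪x, h⟫_𝕜 := LinearMap.congr_fun hg₀ h
    have hg₀_bound (y : LinearMap.range (T : E →ₗ[𝕜] F)) : ‖g₀ y‖ ≤ √c * ‖y‖ := by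
      obtain ⟨h, rfl⟩ := LinearMap.surjective_rangeRestrict _ y
      refine le_of_pow_le_pow_left₀ two_ne_zero (by positivity) ?_
      rw [mul_pow, Real.sq_sqrt hc.le, hg₀_apply]
      exact hbound h
    obtain ⟨g, hg, -⟩ := exists_extension_norm_eq _ (g₀.mkContinuous √c hg₀_bound)
    refine ⟨(InnerProductSpace.toDual 𝕜 F).symm g, ext_inner_right 𝕜 fun h => ?_⟩
    rw [adjoint_inner_left, InnerProductSpace.toDual_symm_apply]
    exact (hg (R h)).trans (hg₀_apply h)

end Douglas

theorem IsSqrtOf.re_inner_self_eq_norm_sq {S X : H →L[ℂ] H} (hS : IsSqrtOf S X) (h : H) :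
    (⟪X h, h⟫_ℂ).re = ‖S h‖ ^ 2 := by
  rw [← hS.2, mul_apply_eq_comp, ← ContinuousLinearMap.coe_coe, hS.1.isSelfAdjoint.isSymmetric]
  exact inner_self_eq_norm_sq (𝕜 := ℂ) (S h)

theorem IsSqrtOf.mem_range_iff {S X : H →L[ℂ] H} (hS : IsSqrtOf S X) (x : H) :
    x ∈ Set.range S ↔ ∃ c > 0, ∀ h : H, ‖⟪x, h⟫_ℂ‖ ^ 2 ≤ c * (⟪X h, h⟫_ℂ).re := by
  simp only [hS.re_inner_self_eq_norm_sq]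
  rw [← ContinuousLinearMap.mem_range_adjoint_iff, hS.1.isSelfAdjoint.adjoint_eq]

theorem IsSqrtOf.range_subset_of_le {S T X Y : H →L[ℂ] H} (hS : IsSqrtOf S X)
    (hT : IsSqrtOf T Y) (hle : ∀ h : H, (⟪X h, h⟫_ℂ).re ≤ (⟪Y h, h⟫_ℂ).re) :
    Set.range S ⊆ Set.range T := by
  rintro x hx
  obtain ⟨c, hc, hbound⟩ := (hS.mem_range_iff x).mp hx
  exact (hT.mem_range_iff x).mpr
    ⟨c, hc, fun h => (hbound h).trans (mul_le_mul_of_nonneg_left (hle h) hc.le)⟩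

namespace IsParallelSum

variable {X G P : H →L[ℂ] H}

omit [CompleteSpace H] in
theorem re_inner_self_le_left (hP : IsParallelSum X G P) (h : H) :
    (⟪P h, h⟫_ℂ).re ≤ (⟪X h, h⟫_ℂ).re :=
  (hP.2 h).1 ⟨h, 0, add_zero h, by simp⟩

omit [CompleteSpace H] in
theorem re_inner_self_le_right (hP : IsParallelSum X G P) (h : H) :
    (⟪P h, h⟫_ℂ).re ≤ (⟪G h, h⟫_ℂ).re :=
  (hP.2 h).1 ⟨0, h, zero_add h, by simp⟩

omit [CompleteSpace H] in
theorem norm_inner_sq_le {x : H} {a b : ℝ} (hP : IsParallelSum X G P) (ha : 0 < a) (hb : 0 < b)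
    (hX : ∀ h : H, ‖⟪x, h⟫_ℂ‖ ^ 2 ≤ a * (⟪X h, h⟫_ℂ).re)
    (hG : ∀ h : H, ‖⟪x, h⟫_ℂ‖ ^ 2 ≤ b * (⟪G h, h⟫_ℂ).re) (h : H) :
    ‖⟪x, h⟫_ℂ‖ ^ 2 ≤ 2 * (a + b) * (⟪P h, h⟫_ℂ).re := by
  have hK : 0 < 2 * (a + b) := by positivity
  refine (div_le_iff₀' hK).mp ((hP.2 h).2 ?_)
  rintro _ ⟨f, g, rfl, rfl⟩
  rw [div_le_iff₀' hK]
  have hXf : 0 ≤ (⟪X f, f⟫_ℂ).re := nonneg_of_mul_nonneg_right ((sq_nonneg _).trans (hX f)) ha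
  have hGg : 0 ≤ (⟪G g, g⟫_ℂ).re := nonneg_of_mul_nonneg_right ((sq_nonneg _).trans (hG g)) hb
  calc ‖⟪x, f + g⟫_ℂ‖ ^ 2 ≤ (‖⟪x, f⟫_ℂ‖ + ‖⟪x, g⟫_ℂ‖) ^ 2 := by
        rw [inner_add_right]; gcongr; exact norm_add_le _ _
    _ ≤ 2 * (‖⟪x, f⟫_ℂ‖ ^ 2 + ‖⟪x, g⟫_ℂ‖ ^ 2) := add_sq_le
    _ ≤ 2 * (a + b) * ((⟪X f, f⟫_ℂ).re + (⟪G g, g⟫_ℂ).re) := by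
        nlinarith [hX f, hG g]

end IsParallelSum

theorem stmt1_general (X G P Sx Sg Sp : H →L[ℂ] H)
    (hP : IsParallelSum X G P)
    (hSx : IsSqrtOf Sx X) (hSg : IsSqrtOf Sg G) (hSp : IsSqrtOf Sp P) :
    Set.range ⇑Sp = Set.range ⇑Sx ∩ Set.range ⇑Sg := by
  refine subset_antisymm (Set.subset_inter (hSp.range_subset_of_le hSx hP.re_inner_self_le_left)
    (hSp.range_subset_of_le hSg hP.re_inner_self_le_right)) ?_
  rintro x ⟨hxX, hxG⟩
  obtain ⟨a, ha, hXa⟩ := (hSx.mem_range_iff x).mp hxX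
  obtain ⟨b, hb, hGb⟩ := (hSg.mem_range_iff x).mp hxG
  exact (hSp.mem_range_iff x).mpr ⟨_, by positivity, hP.norm_inner_sq_le ha hb hXa hGb⟩

/-- `ran (X:G)^{1/2} = ran X^{1/2} ∩ ran G^{1/2}`. -/
theorem stmt1 (X G P Sx Sg Sp : H →L[ℂ] H)
    (hX : X.IsPositive) (hG : G.IsPositive)
    (hP : IsParallelSum X G P)
    (hSx : IsSqrtOf Sx X) (hSg : IsSqrtOf Sg G) (hSp : IsSqrtOf Sp P) :
    Set.range ⇑Sp = Set.range ⇑Sx ∩ Set.range ⇑Sg :=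
  stmt1_general X G P Sx Sg Sp hP hSx hSg hSp
end

section
/- For X, G ∈ B^+(H), the parallel sum X:G is the zero operator if and only if ran X^{1/2} ∩ ran G^{1/2} = {0}. -/
open Filter Topology

variable {H : Type*} [NormedAddCommGroup H] [InnerProductSpace ℂ H] [CompleteSpace H]

/-!
Since `⟪X f, f⟫ = ‖X^{1/2} f‖²`, the value `⟪(X:G) h, h⟫` is the infimum of
`‖X^{1/2} f‖² + ‖G^{1/2} g‖²` over `h = f + g`. If `k = X^{1/2} u = G^{1/2} v`, then for every
such splitting of `k` we get `‖k‖² = ⟪u, X^{1/2} f⟫ + ⟪v, G^{1/2} g⟫`, so by Cauchy–Schwarz `‖k‖⁴`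
is at most a constant times `‖X^{1/2} f‖² + ‖G^{1/2} g‖²`; hence `k = 0` once the infimum vanishes.
Conversely, in `H ⊕ H` a vector `(a, b)` orthogonal to every `(X^{1/2} g, G^{1/2} g)` satisfies
`X^{1/2} a = G^{1/2} (-b)`, which is `0` when the ranges meet only in `0`. So `(X^{1/2} h, 0)` lies
in the closure of those vectors, and its squared distance to `(X^{1/2} g, G^{1/2} g)` is
`‖X^{1/2} (h - g)‖² + ‖G^{1/2} g‖²`, which makes the infimum `0`.
-/

open scoped InnerProductSpace

section SplitEnergies

variable {𝕜 E : Type*} [RCLike 𝕜] [NormedAddCommGroup E] [InnerProductSpace 𝕜 E]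

theorem LinearMap.IsSymmetric.forall_re_inner_map_self_eq_zero_iff {T : E →ₗ[𝕜] E}
    (hT : T.IsSymmetric) : (∀ x, RCLike.re ⟪T x, x⟫_𝕜 = 0) ↔ T = 0 := by
  rw [← hT.inner_map_self_eq_zero]
  refine forall_congr' fun x => ?_
  rw [← RCLike.ofReal_eq_zero (K := 𝕜), hT.coe_re_inner_apply_self]

def splitEnergies (A B : E →L[𝕜] E) (h : E) : Set ℝ :=
  {r | ∃ f g : E, f + g = h ∧ r = ‖A f‖ ^ 2 + ‖B g‖ ^ 2}

variable {A B : E →L[𝕜] E}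

theorem sq_norm_le_of_add_eq (hA : (A : E →ₗ[𝕜] E).IsSymmetric)
    (hB : (B : E →ₗ[𝕜] E).IsSymmetric) {u v f g k : E} (hu : A u = k) (hv : B v = k)
    (hfg : f + g = k) : ‖k‖ ^ 2 ≤ ‖u‖ * ‖A f‖ + ‖v‖ * ‖B g‖ :=
  calc ‖k‖ ^ 2 = RCLike.re ⟪k, f⟫_𝕜 + RCLike.re ⟪k, g⟫_𝕜 := by
        rw [← map_add, ← inner_add_right, hfg, inner_self_eq_norm_sq]
    _ = RCLike.re ⟪u, A f⟫_𝕜 + RCLike.re ⟪v, B g⟫_𝕜 := by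
        have hkf : ⟪k, f⟫_𝕜 = ⟪u, A f⟫_𝕜 := hu ▸ hA u f
        have hkg : ⟪k, g⟫_𝕜 = ⟪v, B g⟫_𝕜 := hv ▸ hB v g
        rw [hkf, hkg]
    _ ≤ ‖u‖ * ‖A f‖ + ‖v‖ * ‖B g‖ := add_le_add (re_inner_le_norm _ _) (re_inner_le_norm _ _)

theorem eq_zero_of_isGLB_splitEnergies (hA : (A : E →ₗ[𝕜] E).IsSymmetric)
    (hB : (B : E →ₗ[𝕜] E).IsSymmetric) {k : E} (hk : k ∈ Set.range A ∩ Set.range B)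
    (h0 : IsGLB (splitEnergies A B k) 0) : k = 0 := by
  obtain ⟨⟨u, hu⟩, v, hv⟩ := hk
  set C := ‖u‖ ^ 2 + ‖v‖ ^ 2 + 1
  have hC : 0 < C := by positivity
  have hbound : ‖k‖ ^ 4 / C ∈ lowerBounds (splitEnergies A B k) := by
    rintro _ ⟨f, g, hfg, rfl⟩
    rw [div_le_iff₀ hC]
    have hk := sq_norm_le_of_add_eq hA hB hu hv hfg
    calc ‖k‖ ^ 4 = (‖k‖ ^ 2) ^ 2 := by ring
      _ ≤ (‖u‖ * ‖A f‖ + ‖v‖ * ‖B g‖) ^ 2 := by gcongr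
      _ ≤ (‖u‖ ^ 2 + ‖v‖ ^ 2) * (‖A f‖ ^ 2 + ‖B g‖ ^ 2) := by
        nlinarith [sq_nonneg (‖u‖ * ‖B g‖ - ‖v‖ * ‖A f‖)]
      _ ≤ (‖A f‖ ^ 2 + ‖B g‖ ^ 2) * C := by nlinarith [sq_nonneg ‖A f‖, sq_nonneg ‖B g‖]
  have h4 : ‖k‖ ^ 4 ≤ 0 := by
    have := h0.2 hbound
    rwa [div_le_iff₀ hC, zero_mul] at this
  exact norm_eq_zero.1 <| (pow_eq_zero_iff (n := 4) (by norm_num)).1 <|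
    le_antisymm h4 (by positivity)

variable [CompleteSpace E]

theorem toLp_apply_zero_mem_closure_range (hA : (A : E →ₗ[𝕜] E).IsSymmetric)
    (hB : (B : E →ₗ[𝕜] E).IsSymmetric) (hAB : Set.range A ∩ Set.range B ⊆ {0}) (h : E) :
    WithLp.toLp 2 (A h, 0) ∈ closure (Set.range fun g => WithLp.toLp 2 (A g, B g)) := by
  set M := LinearMap.range
    ((WithLp.linearEquiv 2 𝕜 (E × E)).symm.toLinearMap ∘ₗ (A : E →ₗ[𝕜] E).prod B)
  change _ ∈ closure (M : Set (WithLp 2 (E × E)))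
  rw [← Submodule.topologicalClosure_coe, ← Submodule.orthogonal_orthogonal_eq_closure,
    SetLike.mem_coe, Submodule.mem_orthogonal]
  intro y hy
  have hperp : ∀ g, ⟪g, A y.fst + B y.snd⟫_𝕜 = 0 := fun g => by
    have := (Submodule.mem_orthogonal M y).1 hy _ ⟨g, rfl⟩
    rw [WithLp.prod_inner_apply] at this
    have hAg : ⟪A g, y.fst⟫_𝕜 = ⟪g, A y.fst⟫_𝕜 := hA g y.fst
    have hBg : ⟪B g, y.snd⟫_𝕜 = ⟪g, B y.snd⟫_𝕜 := hB g y.snd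
    rw [inner_add_right, ← hAg, ← hBg]
    simpa using this
  have hAy : A y.fst = 0 := by
    have hsum : A y.fst + B y.snd = 0 := inner_self_eq_zero.1 (hperp _)
    refine hAB ⟨⟨_, rfl⟩, -y.snd, ?_⟩
    rw [map_neg, neg_eq_iff_add_eq_zero, add_comm, hsum]
  rw [WithLp.prod_inner_apply]
  calc ⟪y.fst, A h⟫_𝕜 + ⟪y.snd, 0⟫_𝕜 = ⟪A y.fst, h⟫_𝕜 := by
        rw [inner_zero_right, add_zero]; exact (hA y.fst h).symm
    _ = 0 := by rw [hAy, inner_zero_left]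

theorem exists_sq_norm_add_lt_of_range_inter_range (hA : (A : E →ₗ[𝕜] E).IsSymmetric)
    (hB : (B : E →ₗ[𝕜] E).IsSymmetric) (hAB : Set.range A ∩ Set.range B ⊆ {0}) (h : E)
    {ε : ℝ} (hε : 0 < ε) : ∃ f g : E, f + g = h ∧ ‖A f‖ ^ 2 + ‖B g‖ ^ 2 < ε := by
  obtain ⟨_, ⟨g, rfl⟩, hdist⟩ := Metric.mem_closure_iff.1
    (toLp_apply_zero_mem_closure_range hA hB hAB h) _ (Real.sqrt_pos.2 hε)
  refine ⟨h - g, g, sub_add_cancel h g, ?_⟩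
  rw [WithLp.prod_dist_eq_of_L2, Real.sqrt_lt_sqrt_iff (by positivity)] at hdist
  simpa [dist_eq_norm, map_sub] using hdist

theorem isGLB_splitEnergies_zero (hA : (A : E →ₗ[𝕜] E).IsSymmetric)
    (hB : (B : E →ₗ[𝕜] E).IsSymmetric) (hAB : Set.range A ∩ Set.range B ⊆ {0}) (h : E) :
    IsGLB (splitEnergies A B h) 0 := by
  refine ⟨?_, fun b hb => not_lt.1 fun hb0 => ?_⟩
  · rintro _ ⟨f, g, -, rfl⟩
    positivity
  · obtain ⟨f, g, hfg, hlt⟩ := exists_sq_norm_add_lt_of_range_inter_range hA hB hAB h hb0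
    exact (hb ⟨f, g, hfg, rfl⟩).not_gt hlt

end SplitEnergies

omit [CompleteSpace H] in
theorem IsSqrtOf.re_inner_apply_self {S X : H →L[ℂ] H} (hS : IsSqrtOf S X) (f : H) :
    (⟪X f, f⟫_ℂ).re = ‖S f‖ ^ 2 := by
  have hsymm : ⟪S (S f), f⟫_ℂ = ⟪S f, S f⟫_ℂ := hS.1.isSymmetric (S f) f
  rw [← hS.2]
  exact hsymm ▸ inner_self_eq_norm_sq (𝕜 := ℂ) (S f)

omit [CompleteSpace H] in
theorem IsParallelSum.isGLB_splitEnergies {X G P Sx Sg : H →L[ℂ] H} (hP : IsParallelSum X G P)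
    (hSx : IsSqrtOf Sx X) (hSg : IsSqrtOf Sg G) (h : H) :
    IsGLB (splitEnergies Sx Sg h) (⟪P h, h⟫_ℂ).re := by
  simpa only [splitEnergies, hSx.re_inner_apply_self, hSg.re_inner_apply_self] using hP.2 h

theorem stmt2_general (X G P Sx Sg : H →L[ℂ] H)
    (hP : IsParallelSum X G P)
    (hSx : IsSqrtOf Sx X) (hSg : IsSqrtOf Sg G) :
    P = 0 ↔ Set.range ⇑Sx ∩ Set.range ⇑Sg = {0} := by
  have hglb := hP.isGLB_splitEnergies hSx hSg
  rw [← ContinuousLinearMap.coe_inj, ContinuousLinearMap.toLinearMap_zero,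
    ← hP.1.isSymmetric.forall_re_inner_map_self_eq_zero_iff, Set.eq_singleton_iff_unique_mem]
  simp only [RCLike.re_to_complex, ContinuousLinearMap.coe_coe]
  constructor
  · intro hP0
    refine ⟨⟨⟨0, map_zero _⟩, 0, map_zero _⟩, fun k hk => ?_⟩
    exact eq_zero_of_isGLB_splitEnergies hSx.1.isSymmetric hSg.1.isSymmetric hk (hP0 k ▸ hglb k)
  · rintro ⟨-, hAB⟩ h
    exact (hglb h).unique (isGLB_splitEnergies_zero hSx.1.isSymmetric hSg.1.isSymmetric hAB h)

/-- `X : G = 0` iff `ran X^{1/2} ∩ ran G^{1/2} = {0}`. -/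
theorem stmt2 (X G P Sx Sg : H →L[ℂ] H)
    (hX : X.IsPositive) (hG : G.IsPositive)
    (hP : IsParallelSum X G P)
    (hSx : IsSqrtOf Sx X) (hSg : IsSqrtOf Sg G) :
    P = 0 ↔ Set.range ⇑Sx ∩ Set.range ⇑Sg = {0} :=
  stmt2_general X G P Sx Sg hP hSx hSg
end

section
/- Let G, F_0 ∈ B^+(H) and define recursively F_{n+1} = μ_G(F_n) = F_n − F_n:G for n ≥ 0. Then the sequence {F_n} is non-increasing (F_0 ≥ F_1 ≥ ⋯ ≥ F_n ≥ F_{n+1} ≥ ⋯ ≥ 0), its strong (pointwise) limit F exists and belongs to B^+(H), and F satisfies F:G = 0, i.e., F is a fixed point of μ_G. -/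
open Filter Topology

variable {H : Type*} [NormedAddCommGroup H] [InnerProductSpace ℂ H] [CompleteSpace H]

/-! The parallel sum satisfies `F n : G ≤ F n`, so the orbit is a decreasing sequence of positive
operators with `F n - F (n + 1) = F n : G`. Such a sequence converges strongly: for `D ≥ 0` one has
`‖D x‖² ≤ ‖D‖ ⟪D x, x⟫`, and with `D = F n - F m ≤ F 0` this turns the convergence of the
decreasing scalar sequence `⟪F n x, x⟫` into the Cauchy property of `F n x`. The limit `L` lies
below every `F n`, so by monotonicity of the parallel sum `L : G ≤ F n : G = F n - F (n + 1)`,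
which tends strongly to `0`. -/

open ContinuousLinearMap

section

variable {𝕜 E : Type*} [RCLike 𝕜] [NormedAddCommGroup E] [InnerProductSpace 𝕜 E]

theorem ContinuousLinearMap.isPositive_of_tendsto {ι : Type*} {l : Filter ι} [l.NeBot]
    {T : ι → E →L[𝕜] E} {L : E →L[𝕜] E} (hT : ∀ᶠ i in l, (T i).IsPositive)
    (hL : ∀ x, Tendsto (fun i => T i x) l (𝓝 (L x))) : L.IsPositive := by
  refine ⟨fun x y => ?_, fun x => ?_⟩
  · refine tendsto_nhds_unique ((hL x).inner tendsto_const_nhds) ?_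
    refine (tendsto_const_nhds.inner (hL y)).congr' ?_
    filter_upwards [hT] with i hi using (hi.inner_left_eq_inner_right x y).symm
  · refine ge_of_tendsto
      ((RCLike.continuous_re.tendsto _).comp ((hL x).inner tendsto_const_nhds)) ?_
    filter_upwards [hT] with i hi using hi.re_inner_nonneg_left x

end

section

variable {E : Type*} [NormedAddCommGroup E] [InnerProductSpace ℂ E]

theorem ContinuousLinearMap.norm_apply_sq_le_of_nonneg [CompleteSpace E] {T : E →L[ℂ] E}
    (hT : 0 ≤ T) (x : E) : ‖T x‖ ^ 2 ≤ ‖T‖ * (inner ℂ (T x) x).re := by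
  obtain ⟨S, rfl⟩ := CStarAlgebra.nonneg_iff_eq_star_mul_self.mp hT
  calc ‖(star S * S) x‖ ^ 2 ≤ (‖S‖ * ‖S x‖) ^ 2 := by
        gcongr
        simpa using (star S).le_opNorm (S x)
    _ = ‖star S * S‖ * (inner ℂ ((star S * S) x) x).re := by
        rw [mul_pow, CStarRing.norm_star_mul_self, apply_norm_sq_eq_inner_adjoint_left,
          star_eq_adjoint, sq]
        rfl

theorem ContinuousLinearMap.cauchySeq_apply_of_antitone [CompleteSpace E] {F : ℕ → E →L[ℂ] E}
    (hF : Antitone F) (h0 : ∀ n, 0 ≤ F n) (x : E) : CauchySeq (fun n => F n x) := by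
  set q : ℕ → ℝ := fun n => (inner ℂ (F n x) x).re
  have hq : ∀ {n m}, n ≤ m → (inner ℂ ((F n - F m) x) x).re = q n - q m := fun _ => by
    simp only [q, sub_apply, inner_sub_left, Complex.sub_re]
  have hq_anti : Antitone q := fun n m h => by
    have := (hF h).re_inner_nonneg_left x
    rw [RCLike.re_to_complex, hq h] at this
    linarith
  obtain ⟨l, hl⟩ : ∃ l, Tendsto q atTop (𝓝 l) := ⟨_, tendsto_atTop_ciInf hq_anti ⟨0, by
    rintro _ ⟨n, rfl⟩
    exact ((nonneg_iff_isPositive _).1 (h0 n)).re_inner_nonneg_left x⟩⟩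
  have key : ∀ {n m}, n ≤ m → ‖F n x - F m x‖ ^ 2 ≤ ‖F 0‖ * (q n - q m) := fun {n m} h => by
    have hD : 0 ≤ F n - F m := sub_nonneg.2 (hF h)
    have hD_le : F n - F m ≤ F 0 := (sub_le_self _ (h0 m)).trans (hF (Nat.zero_le n))
    calc ‖(F n - F m) x‖ ^ 2 ≤ ‖F n - F m‖ * (inner ℂ ((F n - F m) x) x).re :=
          norm_apply_sq_le_of_nonneg hD x
      _ ≤ ‖F 0‖ * (q n - q m) := by
          rw [hq h]
          gcongr
          · linarith [hq_anti h]
          · exact CStarAlgebra.norm_le_norm_of_nonneg_of_le hD hD_le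
  have bound : ∀ {n m N}, N ≤ n → n ≤ m → dist (F n x) (F m x) ≤ √(‖F 0‖ * (q N - l)) :=
    fun {n m N} hN h => by
      rw [dist_eq_norm]
      refine Real.le_sqrt_of_sq_le <| (key h).trans (mul_le_mul_of_nonneg_left ?_ (norm_nonneg _))
      linarith [hq_anti hN, hq_anti.le_of_tendsto hl m]
  refine cauchySeq_of_le_tendsto_0 (fun N => √(‖F 0‖ * (q N - l))) (fun n m N hn hm => ?_) ?_
  · rcases le_total n m with h | h
    · exact bound hn h
    · exact dist_comm (F n x) _ ▸ bound hm h
  · simpa using ((hl.sub_const l).const_mul ‖F 0‖).sqrt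

theorem ContinuousLinearMap.exists_tendsto_apply_of_antitone [CompleteSpace E]
    {F : ℕ → E →L[ℂ] E} (hF : Antitone F) (h0 : ∀ n, 0 ≤ F n) :
    ∃ L : E →L[ℂ] E, (∀ x, Tendsto (fun n => F n x) atTop (𝓝 (L x))) ∧
      0 ≤ L ∧ ∀ n, L ≤ F n := by
  choose f hf using fun x => cauchySeq_tendsto_of_complete (cauchySeq_apply_of_antitone hF h0 x)
  let L := continuousLinearMapOfTendsto F (tendsto_pi_nhds.mpr hf)
  have hL : ∀ x, Tendsto (fun n => F n x) atTop (𝓝 (L x)) := hf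
  refine ⟨L, hL, (nonneg_iff_isPositive L).2 (isPositive_of_tendsto
    (.of_forall fun n => (nonneg_iff_isPositive _).1 (h0 n)) hL), fun n => ?_⟩
  exact isPositive_of_tendsto (eventually_atTop.2 ⟨n, fun m hm => hF hm⟩)
    fun x => tendsto_const_nhds.sub (hL x)

def parallelSumForms (X G : E →L[ℂ] E) (h : E) : Set ℝ :=
  {r : ℝ | ∃ f g : E, f + g = h ∧ r = (inner ℂ (X f) f : ℂ).re + (inner ℂ (G g) g : ℂ).re}

theorem isParallelSum_iff {X G P : E →L[ℂ] E} : IsParallelSum X G P ↔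
    P.IsPositive ∧ ∀ h, IsGLB (parallelSumForms X G h) (inner ℂ (P h) h).re :=
  Iff.rfl

theorem lowerBounds_parallelSumForms_mono {X Y : E →L[ℂ] E} (hXY : X ≤ Y) (G : E →L[ℂ] E)
    (h : E) : lowerBounds (parallelSumForms X G h) ⊆ lowerBounds (parallelSumForms Y G h) := by
  rintro b hb _ ⟨f, g, rfl, rfl⟩
  have := hXY.re_inner_nonneg_left f
  rw [RCLike.re_to_complex, sub_apply, inner_sub_left, Complex.sub_re] at this
  linarith [hb ⟨f, g, rfl, rfl⟩]

theorem IsParallelSum.le_left {X G P : E →L[ℂ] E} (hX : 0 ≤ X) (hP : IsParallelSum X G P) :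
    P ≤ X := by
  refine ⟨((nonneg_iff_isPositive X).1 hX).isSymmetric.sub hP.1.isSymmetric, fun h => ?_⟩
  have : (inner ℂ (P h) h).re ≤ (inner ℂ (X h) h).re :=
    ((isParallelSum_iff.1 hP).2 h).1 ⟨h, 0, add_zero h, by simp⟩
  rw [reApplyInnerSelf_apply, sub_apply, inner_sub_left, map_sub, RCLike.re_to_complex,
    RCLike.re_to_complex]
  linarith

theorem isParallelSum_zero_of_tendsto {X G : E →L[ℂ] E} {Y P : ℕ → E →L[ℂ] E} (hX : 0 ≤ X)
    (hG : G.IsPositive) (hXY : ∀ n, X ≤ Y n) (hP : ∀ n, IsParallelSum (Y n) G (P n))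
    (hP0 : ∀ h, Tendsto (fun n => (inner ℂ (P n h) h).re) atTop (𝓝 0)) :
    IsParallelSum X G 0 := by
  refine isParallelSum_iff.2 ⟨isPositive_zero, fun h => ?_⟩
  rw [zero_apply, inner_zero_left, Complex.zero_re]
  refine ⟨?_, fun b hb => ?_⟩
  · rintro _ ⟨f, g, -, rfl⟩
    exact add_nonneg (((nonneg_iff_isPositive X).1 hX).re_inner_nonneg_left f)
      (hG.re_inner_nonneg_left g)
  · exact ge_of_tendsto' (hP0 h) fun n =>
      ((hP n).2 h).2 (lowerBounds_parallelSumForms_mono (hXY n) G h hb)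

end

/-- Lemma 2 of the paper. The orbit `F_{n+1} = μ_G(F_n)` of a nonnegative
operator `F_0` is non-increasing, its strong limit `F` exists, is a nonnegative operator, and
satisfies `F : G = 0`, i.e. `F` is a fixed point of `μ_G`. -/
theorem stmt3 (G : H →L[ℂ] H) (hG : G.IsPositive)
    (F : ℕ → H →L[ℂ] H) (hF0 : (F 0).IsPositive) (hrec : IsMuOrbit G F) :
    (∀ n : ℕ, (F n).IsPositive ∧ (F n - F (n + 1)).IsPositive) ∧
    ∃ L : H →L[ℂ] H, (∀ x : H, Tendsto (fun n => F n x) atTop (𝓝 (L x))) ∧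
      L.IsPositive ∧ IsParallelSum L G 0 := by
  choose P hP hFP using hrec
  have hstep : ∀ n, F n - F (n + 1) = P n := fun n => by rw [hFP n, sub_sub_cancel]
  have hF : ∀ n, 0 ≤ F n := by
    intro n
    induction n with
    | zero => exact (nonneg_iff_isPositive _).2 hF0
    | succ n ih => rw [hFP n, sub_nonneg]; exact (hP n).le_left ih
  have hanti : Antitone F := antitone_nat_of_succ_le fun n =>
    (le_def _ _).2 <| (hstep n).symm ▸ (hP n).1
  obtain ⟨L, hL, hL0, hLF⟩ := exists_tendsto_apply_of_antitone hanti hF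
  have hP0 : ∀ h, Tendsto (fun n => P n h) atTop (𝓝 0) := fun h => by
    simpa [← hstep] using (hL h).sub ((hL h).comp (tendsto_add_atTop_nat 1))
  refine ⟨fun n => ⟨(nonneg_iff_isPositive _).1 (hF n), hstep n ▸ (hP n).1⟩, L, hL,
    (nonneg_iff_isPositive L).1 hL0, isParallelSum_zero_of_tendsto hL0 hG hLF hP fun h => ?_⟩
  simpa [Function.comp_def] using
    (Complex.continuous_re.tendsto _).comp ((hP0 h).inner (tendsto_const_nhds (x := h)))
end

section
/- Let G, F_0 ∈ B^+(H) and let W̄ be the unique bounded contraction on H satisfying W̄ (G+F_0)^{1/2} f = F_0^{1/2} f for all f ∈ H and W̄ g = 0 for g ∈ ker(G+F_0). Then ran (I − W̄ W̄*)^{1/2} = { f ∈ H : F_0^{1/2} f ∈ ran G^{1/2} } = { f ∈ H : F_0^{1/2} f ∈ ran (F_0:G)^{1/2} }. -/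
/-!
Write `S = (G + F₀)^{1/2}`, so that `‖F₀^{1/2} y‖ = ‖W S y‖` and
`‖G^{1/2} y‖² = ‖S y‖² - ‖W S y‖²`. Completing the square in the infimum defining the parallel
sum gives `‖(F₀:G)^{1/2} y‖² = ‖W S y‖² - ‖W* W S y‖² = ‖D W S y‖²` with `D = (I - W W*)^{1/2}`;
the infimum is attained in the limit because `W* x ⊥ ker S ⊆ ker W`, i.e. `ran W* ⊆ cl (ran S)`.
The inequality `‖W u‖² - ‖W* W u‖² ≤ ‖u‖² - ‖W u‖²` then gives `‖(F₀:G)^{1/2} y‖ ≤ ‖G^{1/2} y‖`.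

All range statements come from the criterion `x ∈ ran A ↔ |⟪x, y⟫| ≤ c ‖A* y‖`. It yields
`ran D ⊆ {f | F₀^{1/2} f ∈ ran (F₀:G)^{1/2}} ⊆ {f | F₀^{1/2} f ∈ ran G^{1/2}}` directly. Conversely,
`F₀^{1/2} f ∈ ran G^{1/2}` means `|⟪f, W v⟫|² ≤ c² (‖v‖² - ‖W v‖²)` for `v ∈ ran S`, hence for
`v = W* x`; together with `x = D² x + W W* x` this bounds `|⟪f, x⟫|` by `(‖D f‖ + c) ‖D x‖`.
-/

open Filter Topology

variable {H : Type*} [NormedAddCommGroup H] [InnerProductSpace ℂ H] [CompleteSpace H]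

open ContinuousLinearMap InnerProductSpace
open scoped InnerProduct

section Adjoint

variable {𝕜 E F : Type*} [RCLike 𝕜] [NormedAddCommGroup E] [InnerProductSpace 𝕜 E]
  [CompleteSpace E] [NormedAddCommGroup F] [InnerProductSpace 𝕜 F] [CompleteSpace F]

theorem ContinuousLinearMap.mem_range_iff_exists_norm_inner_le (A : E →L[𝕜] F) (x : F) :
    x ∈ Set.range A ↔ ∃ c, 0 ≤ c ∧ ∀ y, ‖inner 𝕜 x y‖ ≤ c * ‖(A†) y‖ := by
  constructor
  · rintro ⟨u, rfl⟩
    exact ⟨‖u‖, norm_nonneg u, fun y => by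
      rw [← adjoint_inner_right]; exact norm_inner_le_norm u _⟩
  · rintro ⟨c, -, hc⟩
    -- `y ↦ ⟪x, y⟫` factors through `A†`; extend it from `range A†` (Hahn–Banach), then Riesz.
    have hker : LinearMap.ker (A† : F →ₗ[𝕜] E) ≤ LinearMap.ker (innerₛₗ 𝕜 x) := fun y hy => by
      simpa [show (A†) y = 0 from hy] using hc y
    let φ : LinearMap.range (A† : F →ₗ[𝕜] E) →ₗ[𝕜] 𝕜 :=
      (LinearMap.ker _).liftQ (innerₛₗ 𝕜 x) hker ∘ₗ (A† : F →ₗ[𝕜] E).quotKerEquivRange.symm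
    have hφ : ∀ y, φ ⟨(A†) y, LinearMap.mem_range_self _ y⟩ = inner 𝕜 x y := fun y => by
      have := LinearMap.quotKerEquivRange_symm_apply_image (A† : F →ₗ[𝕜] E) y
        (LinearMap.mem_range_self _ y)
      simp only [φ, LinearMap.comp_apply, LinearEquiv.coe_coe, ContinuousLinearMap.coe_coe] at this ⊢
      rw [this]
      rfl
    obtain ⟨g, hg, -⟩ := exists_extension_norm_eq _ (φ.mkContinuous c <| by
      rintro ⟨_, y, rfl⟩
      simpa [hφ] using hc y)
    refine ⟨(toDual 𝕜 E).symm g, ext_inner_right 𝕜 fun y => ?_⟩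
    rw [← adjoint_inner_right, toDual_symm_apply, hg ⟨(A†) y, LinearMap.mem_range_self _ y⟩]
    exact hφ y

variable {G : Type*} [NormedAddCommGroup G] [InnerProductSpace 𝕜 G] [CompleteSpace G]

theorem ContinuousLinearMap.range_subset_range_of_norm_adjoint_apply_le (A : G →L[𝕜] F)
    (B : E →L[𝕜] F) (h : ∀ y, ‖(A†) y‖ ≤ ‖(B†) y‖) : Set.range A ⊆ Set.range B := by
  intro x hx
  obtain ⟨c, hc, hxc⟩ := (A.mem_range_iff_exists_norm_inner_le x).mp hx
  exact (B.mem_range_iff_exists_norm_inner_le x).mpr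
    ⟨c, hc, fun y => (hxc y).trans (mul_le_mul_of_nonneg_left (h y) hc)⟩

theorem ContinuousLinearMap.range_adjoint_subset_closure_range_adjoint (T : E →L[𝕜] F)
    (U : E →L[𝕜] G) (h : ∀ g, T g = 0 → U g = 0) :
    Set.range (U†) ⊆ closure (Set.range (T†)) := by
  rintro _ ⟨x, rfl⟩
  have : (U†) x ∈ T.kerᗮ := fun k hk => by
    rw [adjoint_inner_right, h k hk, inner_zero_left]
  rwa [orthogonal_ker, ← SetLike.mem_coe, Submodule.topologicalClosure_coe,
    LinearMap.coe_range, coe_coe] at this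

/-- Completing the square: on `a + b = u`, the form `‖W a‖² + (‖b‖² - ‖W b‖²)` is minimal at
`b = W† W u`. -/
theorem ContinuousLinearMap.norm_apply_sub_sq_add_defect (W : E →L[𝕜] F) (u b : E) :
    ‖W (u - b)‖ ^ 2 + (‖b‖ ^ 2 - ‖W b‖ ^ 2) =
      ‖W u‖ ^ 2 - ‖(W†) (W u)‖ ^ 2 + ‖b - (W†) (W u)‖ ^ 2 := by
  rw [map_sub, norm_sub_sq (𝕜 := 𝕜), norm_sub_sq (𝕜 := 𝕜) b, adjoint_inner_right,
    inner_re_symm (𝕜 := 𝕜) (W u)]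
  ring

theorem ContinuousLinearMap.norm_apply_sq_sub_norm_adjoint_apply_sq_le (W : E →L[𝕜] F) (u : E) :
    ‖W u‖ ^ 2 - ‖(W†) (W u)‖ ^ 2 ≤ ‖u‖ ^ 2 - ‖W u‖ ^ 2 := by
  have := W.norm_apply_sub_sq_add_defect u u
  rw [sub_self, map_zero, norm_zero] at this
  nlinarith [sq_nonneg ‖u - (W†) (W u)‖]

theorem ContinuousLinearMap.norm_apply_sq_of_mul_self_eq_one_sub {D : F →L[𝕜] F}
    {W : E →L[𝕜] F} (hD : IsSelfAdjoint D) (hDW : D * D = 1 - W ∘L W†) (x : F) :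
    ‖D x‖ ^ 2 = ‖x‖ ^ 2 - ‖(W†) x‖ ^ 2 := by
  rw [apply_norm_sq_eq_inner_adjoint_left, apply_norm_sq_eq_inner_adjoint_left (W†),
    adjoint_adjoint, hD.adjoint_eq, ← mul_def, hDW, sub_apply, one_apply_eq_self, inner_sub_left,
    map_sub, inner_self_eq_norm_sq]

theorem ContinuousLinearMap.mem_range_of_norm_inner_apply_sq_le {D : F →L[𝕜] F}
    {W : E →L[𝕜] F} (hD : IsSelfAdjoint D) (hDW : D * D = 1 - W ∘L W†) {s : Set E}
    (hs : Set.range (W†) ⊆ closure s) {f : F} {c : ℝ} (hc : 0 ≤ c)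
    (hf : ∀ v ∈ s, ‖inner 𝕜 f (W v)‖ ^ 2 ≤ c ^ 2 * (‖v‖ ^ 2 - ‖W v‖ ^ 2)) :
    f ∈ Set.range D := by
  have hclosed : IsClosed {v | ‖inner 𝕜 f (W v)‖ ^ 2 ≤ c ^ 2 * (‖v‖ ^ 2 - ‖W v‖ ^ 2)} :=
    isClosed_le (by fun_prop) (by fun_prop)
  have hW : ∀ x, ‖inner 𝕜 f (W ((W†) x))‖ ≤ c * ‖D x‖ := fun x => by
    have h1 : ‖inner 𝕜 f (W ((W†) x))‖ ^ 2 ≤ c ^ 2 * (‖(W†) x‖ ^ 2 - ‖W ((W†) x)‖ ^ 2) :=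
      closure_minimal hf hclosed (hs ⟨x, rfl⟩)
    have h2 := (W†).norm_apply_sq_sub_norm_adjoint_apply_sq_le x
    rw [adjoint_adjoint] at h2
    rw [← pow_le_pow_iff_left₀ (norm_nonneg _) (by positivity) two_ne_zero, mul_pow,
      norm_apply_sq_of_mul_self_eq_one_sub hD hDW]
    exact h1.trans (mul_le_mul_of_nonneg_left h2 (by positivity))
  refine (D.mem_range_iff_exists_norm_inner_le f).mpr ⟨‖D f‖ + c, by positivity, fun x => ?_⟩
  have hx : D (D x) + W ((W†) x) = x := by
    simpa using congr($hDW x + W ((W†) x))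
  rw [hD.adjoint_eq]
  calc ‖inner 𝕜 f x‖ = ‖inner 𝕜 (D f) (D x) + inner 𝕜 f (W ((W†) x))‖ := by
        rw [← adjoint_inner_right, hD.adjoint_eq, ← inner_add_right, hx]
    _ ≤ ‖D f‖ * ‖D x‖ + c * ‖D x‖ := norm_add_le_of_le (norm_inner_le_norm _ _) (hW x)
    _ = (‖D f‖ + c) * ‖D x‖ := by ring

end Adjoint

section ParallelSum

variable {S X : H →L[ℂ] H}

theorem IsSqrtOf.adjoint_eq (h : IsSqrtOf S X) : S† = S :=
  h.1.isSelfAdjoint.adjoint_eq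

theorem IsSqrtOf.inner_apply_left (h : IsSqrtOf S X) (x y : H) :
    inner ℂ (S x) y = inner ℂ x (S y) :=
  h.1.isSelfAdjoint.isSymmetric x y

theorem IsSqrtOf.norm_sq_apply (h : IsSqrtOf S X) (y : H) :
    ‖S y‖ ^ 2 = (inner ℂ (X y) y).re := by
  rw [apply_norm_sq_eq_inner_adjoint_left, h.adjoint_eq, ← mul_def, h.2]
  rfl

theorem IsSqrtOf.norm_sq_apply_eq_sub {S₁ X₁ S₂ X₂ : H →L[ℂ] H} (h₁ : IsSqrtOf S₁ X₁)
    (hS : IsSqrtOf S (X₁ + X₂)) (h₂ : IsSqrtOf S₂ X₂) (y : H) :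
    ‖S₁ y‖ ^ 2 = ‖S y‖ ^ 2 - ‖S₂ y‖ ^ 2 := by
  rw [h₁.norm_sq_apply, hS.norm_sq_apply, h₂.norm_sq_apply, add_apply, inner_add_left,
    Complex.add_re]
  ring

theorem IsSqrtOf.range_adjoint_subset_closure_range {W : H →L[ℂ] H} (hS : IsSqrtOf S X)
    (hW : ∀ g, X g = 0 → W g = 0) : Set.range (W†) ⊆ closure (Set.range S) := by
  simpa only [hS.adjoint_eq] using S.range_adjoint_subset_closure_range_adjoint W
    fun g hg => hW g (by rw [← hS.2, mul_def, comp_apply, hg, map_zero])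

theorem IsParallelSum.re_inner_apply_self_eq {G P W : H →L[ℂ] H} (hP : IsParallelSum X G P)
    (hX : ∀ f, (inner ℂ (X f) f).re = ‖W (S f)‖ ^ 2)
    (hG : ∀ g, (inner ℂ (G g) g).re = ‖S g‖ ^ 2 - ‖W (S g)‖ ^ 2)
    (hW : Set.range (W†) ⊆ closure (Set.range S)) (h : H) :
    (inner ℂ (P h) h).re = ‖W (S h)‖ ^ 2 - ‖(W†) (W (S h))‖ ^ 2 := by
  set p := (W†) (W (S h))
  have hvalue : ∀ g, (inner ℂ (X (h - g)) (h - g)).re + (inner ℂ (G g) g).re =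
      ‖W (S h)‖ ^ 2 - ‖p‖ ^ 2 + ‖S g - p‖ ^ 2 := fun g => by
    rw [hX, hG, map_sub, ← W.norm_apply_sub_sq_add_defect]
  refine (hP.2 h).unique (isGLB_of_mem_closure ?_ ?_)
  · rintro _ ⟨f, g, hfg, rfl⟩
    rw [eq_sub_of_add_eq hfg, hvalue]
    exact le_add_of_nonneg_right (sq_nonneg _)
  · have hcont : ContinuousAt (fun v => ‖W (S h)‖ ^ 2 - ‖p‖ ^ 2 + ‖v - p‖ ^ 2) p := by fun_prop
    refine closure_mono ?_ (by simpa using mem_closure_image hcont (hW ⟨_, rfl⟩))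
    rintro _ ⟨_, ⟨g, rfl⟩, rfl⟩
    exact ⟨h - g, g, sub_add_cancel h g, (hvalue g).symm⟩

end ParallelSum

theorem stmt4_general (G F₀ S Sf0 Sg W D Par SPar : H →L[ℂ] H)
    (hS : IsSqrtOf S (G + F₀)) (hSf0 : IsSqrtOf Sf0 F₀) (hSg : IsSqrtOf Sg G)
    (hW1 : ∀ f : H, W (S f) = Sf0 f)
    (hW2 : ∀ g : H, (G + F₀) g = 0 → W g = 0)
    (hD : IsSqrtOf D (1 - W * ContinuousLinearMap.adjoint W))
    (hPar : IsParallelSum F₀ G Par) (hSPar : IsSqrtOf SPar Par) :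
    Set.range ⇑D = {f : H | Sf0 f ∈ Set.range ⇑Sg} ∧
    Set.range ⇑D = {f : H | Sf0 f ∈ Set.range ⇑SPar} := by
  have hF₀ : ∀ f, (inner ℂ (F₀ f) f).re = ‖W (S f)‖ ^ 2 := fun f => by
    rw [hW1, hSf0.norm_sq_apply]
  have hSg_sq : ∀ g, ‖Sg g‖ ^ 2 = ‖S g‖ ^ 2 - ‖W (S g)‖ ^ 2 := fun g => by
    rw [hSg.norm_sq_apply_eq_sub hS hSf0, hW1]
  have hclosure := hS.range_adjoint_subset_closure_range hW2
  have hD_sq := norm_apply_sq_of_mul_self_eq_one_sub hD.1.isSelfAdjoint hD.2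
  have hSPar_eq : ∀ y, ‖SPar y‖ = ‖D (W (S y))‖ := fun y => by
    rw [← sq_eq_sq₀ (norm_nonneg _) (norm_nonneg _), hSPar.norm_sq_apply,
      hPar.re_inner_apply_self_eq hF₀ (fun g => by rw [← hSg.norm_sq_apply, hSg_sq]) hclosure,
      hD_sq]
  have hD_SPar : ∀ f ∈ Set.range D, Sf0 f ∈ Set.range SPar := by
    rintro _ ⟨u, rfl⟩
    refine (SPar.mem_range_iff_exists_norm_inner_le _).mpr ⟨‖u‖, norm_nonneg u, fun y => ?_⟩
    rw [hSPar.adjoint_eq, hSPar_eq, hSf0.inner_apply_left, ← hW1, hD.inner_apply_left]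
    exact norm_inner_le_norm _ _
  have hSPar_Sg : Set.range SPar ⊆ Set.range Sg :=
    SPar.range_subset_range_of_norm_adjoint_apply_le Sg fun y => by
      rw [hSPar.adjoint_eq, hSg.adjoint_eq, ← pow_le_pow_iff_left₀ (norm_nonneg _) (norm_nonneg _)
        two_ne_zero, hSPar_eq, hD_sq, hSg_sq]
      exact W.norm_apply_sq_sub_norm_adjoint_apply_sq_le (S y)
  have hSg_D : ∀ f, Sf0 f ∈ Set.range Sg → f ∈ Set.range D := by
    intro f hf
    obtain ⟨c, hc, hfc⟩ := (Sg.mem_range_iff_exists_norm_inner_le _).mp hf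
    refine mem_range_of_norm_inner_apply_sq_le hD.1.isSelfAdjoint hD.2 hclosure hc ?_
    rintro _ ⟨y, rfl⟩
    rw [← hSg_sq, ← mul_pow, hW1, ← hSf0.inner_apply_left, ← hSg.adjoint_eq]
    exact pow_le_pow_left₀ (norm_nonneg _) (hfc y) 2
  exact ⟨Set.ext fun f => ⟨fun hf => hSPar_Sg (hD_SPar f hf), hSg_D f⟩,
    Set.ext fun f => ⟨hD_SPar f, fun hf => hSg_D f (hSPar_Sg hf)⟩⟩

/-- Proposition 2 of the paper. If `W` is the contraction determined by
`W (G+F₀)^{1/2} f = F₀^{1/2} f` and `W = 0` on `ker (G+F₀)`, then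
`ran (I - W W*)^{1/2} = {f : F₀^{1/2} f ∈ ran G^{1/2}} = {f : F₀^{1/2} f ∈ ran (F₀:G)^{1/2}}`. -/
theorem stmt4 (G F₀ S Sf0 Sg W D Par SPar : H →L[ℂ] H)
    (hG : G.IsPositive) (hF₀ : F₀.IsPositive)
    (hS : IsSqrtOf S (G + F₀)) (hSf0 : IsSqrtOf Sf0 F₀) (hSg : IsSqrtOf Sg G)
    (hWc : ‖W‖ ≤ 1)
    (hW1 : ∀ f : H, W (S f) = Sf0 f)
    (hW2 : ∀ g : H, (G + F₀) g = 0 → W g = 0)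
    (hD : IsSqrtOf D (1 - W * ContinuousLinearMap.adjoint W))
    (hPar : IsParallelSum F₀ G Par) (hSPar : IsSqrtOf SPar Par) :
    Set.range ⇑D = {f : H | Sf0 f ∈ Set.range ⇑Sg} ∧
    Set.range ⇑D = {f : H | Sf0 f ∈ Set.range ⇑SPar} :=
  stmt4_general G F₀ S Sf0 Sg W D Par SPar hS hSf0 hSg hW1 hW2 hD hPar hSPar
end

section
/- Let G, F_0 ∈ B^+(H) commute (F_0 G = G F_0), and let F = τ_G(F_0). Then F = F_0^{1/2} P_N F_0^{1/2}, where N = ker G ∩ closure(ran F_0) and P_N is the orthogonal projection onto N. In particular: (1) if ker G ⊆ ker F_0 then F = 0; (2) if F_0 = G then F = 0; (3) if ker G = {0} then F = 0. -/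
open Filter Topology

variable {H : Type*} [NormedAddCommGroup H] [InnerProductSpace ℂ H] [CompleteSpace H]

/-!
Along the orbit `F n = μ_G^[n](F₀)` every iterate stays positive and commutes with `G`: a parallel
sum `X : G` commutes with every unitary commuting with `X` and `G`, because its quadratic form is an
infimum invariant under such unitaries, and `G` is a multiple of the real part of the unitary
`a + i √(1 - a²)`, `a = G / (‖G‖ + 1)`. The iterates fix `ker G`, so `τ = lim F n` agrees with `F₀`
there. Since `F n - F (n + 1) = F n : G` dominates `τ : G` and these increments tend to zero,
`τ : G = 0`. For commuting `τ` and `G` this forces `τ G = 0`: for every splitting `G u = f + g`,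
`⟪τ G u, G u⟫ = ⟪τ G u, f⟫ + ⟪G τ u, g⟫` is controlled by `⟪τ f, f⟫ + ⟪G g, g⟫`, which can be made
arbitrarily small. Finally `F₀^{1/2} P_N F₀^{1/2}` also equals `F₀` on `ker G` and vanishes on
`ran G`, and these two subspaces determine an operator.
-/

section InnerProductSpace

variable {E : Type*} [NormedAddCommGroup E] [InnerProductSpace ℂ E]

namespace IsSqrtOf

variable {S T : E →L[ℂ] E}

theorem re_inner_apply_self_s7 (h : IsSqrtOf S T) (x : E) :
    (inner ℂ (T x) x : ℂ).re = ‖S x‖ ^ 2 := by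
  rw [← h.2, mul_apply_eq_comp, h.1.inner_left_eq_inner_right]
  exact inner_self_eq_norm_sq (𝕜 := ℂ) _

theorem apply_eq_zero {x : E} (h : IsSqrtOf S T) (hx : (inner ℂ (T x) x : ℂ).re = 0) :
    S x = 0 := by
  rw [h.re_inner_apply_self_s7] at hx
  simpa using hx

end IsSqrtOf

namespace IsOrthProjOnto

variable {M : Submodule ℂ E} {P : E →L[ℂ] E}

theorem apply_of_mem (h : IsOrthProjOnto M P) {x : E} (hx : x ∈ M) : P x = x := by
  have := Submodule.disjoint_def.mp M.orthogonal_disjoint _ (M.sub_mem hx (h x).1) (h x).2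
  exact (sub_eq_zero.mp this).symm

theorem apply_of_mem_orthogonal (h : IsOrthProjOnto M P) {x : E} (hx : x ∈ Mᗮ) : P x = 0 := by
  refine Submodule.disjoint_def.mp M.orthogonal_disjoint _ (h x).1 ?_
  simpa using Mᗮ.sub_mem hx (h x).2

theorem apply_map_eq_zero (h : IsOrthProjOnto M P) {G : E →L[ℂ] E} (hG : G.IsSymmetric)
    (hM : ∀ z ∈ M, G z = 0) (x : E) : P (G x) = 0 :=
  h.apply_of_mem_orthogonal fun z hz => by
    rw [← ContinuousLinearMap.coe_coe, ← hG, ContinuousLinearMap.coe_coe, hM z hz, inner_zero_left]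

end IsOrthProjOnto

theorem ContinuousLinearMap.re_inner_le_re_inner_of_le {S T : E →L[ℂ] E} (h : S ≤ T) (x : E) :
    (inner ℂ (S x) x : ℂ).re ≤ (inner ℂ (T x) x : ℂ).re := by
  have := ((ContinuousLinearMap.le_def S T).mp h).re_inner_nonneg_left x
  rwa [sub_apply, inner_sub_left, map_sub, sub_nonneg] at this

def parallelSumValues (X G : E →L[ℂ] E) (h : E) : Set ℝ :=
  {r | ∃ f g : E, f + g = h ∧ r = (inner ℂ (X f) f : ℂ).re + (inner ℂ (G g) g : ℂ).re}

namespace IsParallelSum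

variable {X G P : E →L[ℂ] E}

theorem isGLB (hP : IsParallelSum X G P) (h : E) :
    IsGLB (parallelSumValues X G h) (inner ℂ (P h) h : ℂ).re :=
  hP.2 h

theorem re_inner_le (hP : IsParallelSum X G P) {f g : E} :
    (inner ℂ (P (f + g)) (f + g) : ℂ).re ≤ (inner ℂ (X f) f : ℂ).re + (inner ℂ (G g) g : ℂ).re :=
  (hP.isGLB (f + g)).1 ⟨f, g, rfl, rfl⟩

end IsParallelSum

theorem IsMuOrbit.antitone {G : E →L[ℂ] E} {F : ℕ → E →L[ℂ] E} (hF : IsMuOrbit G F) :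
    Antitone F := by
  refine antitone_nat_of_succ_le fun n => ?_
  obtain ⟨P, hP, hsucc⟩ := hF n
  rw [hsucc, ContinuousLinearMap.le_def, sub_sub_cancel]
  exact hP.1

section StrongLimit

variable {T : ℕ → E →L[ℂ] E} {L : E →L[ℂ] E}

theorem ContinuousLinearMap.isPositive_of_tendsto_s7 (hT : ∀ n, (T n).IsPositive)
    (hL : ∀ x, Tendsto (fun n => T n x) atTop (𝓝 (L x))) : L.IsPositive := by
  refine ⟨fun x y => ?_, fun x => ?_⟩
  · change inner ℂ (L x) y = inner ℂ x (L y)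
    exact tendsto_nhds_unique ((hL x).inner tendsto_const_nhds)
      (by simpa only [(hT _).inner_left_eq_inner_right] using tendsto_const_nhds.inner (hL y))
  · rw [ContinuousLinearMap.reApplyInnerSelf_apply]
    exact ge_of_tendsto ((RCLike.continuous_re.tendsto _).comp ((hL x).inner tendsto_const_nhds))
      (Eventually.of_forall fun n => (hT n).re_inner_nonneg_left x)

theorem Commute.of_tendsto {G : E →L[ℂ] E} (hT : ∀ n, Commute (T n) G)
    (hL : ∀ x, Tendsto (fun n => T n x) atTop (𝓝 (L x))) : Commute L G := by
  ext x
  simp only [mul_apply_eq_comp]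
  refine tendsto_nhds_unique (hL (G x)) ?_
  simp_rw [← mul_apply_eq_comp, (hT _).eq, mul_apply_eq_comp]
  exact (G.continuous.tendsto _).comp (hL x)

end StrongLimit

end InnerProductSpace

namespace IsSqrtOf

variable {S T : H →L[ℂ] H}

theorem commute {B : H →L[ℂ] H} (h : IsSqrtOf S T) (hB : Commute T B) : Commute S B := by
  rw [← CFC.sqrt_unique h.2 ((ContinuousLinearMap.nonneg_iff_isPositive S).mpr h.1),
    CFC.sqrt_eq_cfc]
  exact hB.cfc_nnreal _

theorem mem_closure_range (h : IsSqrtOf S T) (x : H) : S x ∈ closure (Set.range T) := by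
  have hT : IsSelfAdjoint T := by
    have := IsSelfAdjoint.star_mul_self S
    rwa [h.1.isSelfAdjoint.star_eq, h.2] at this
  have hcl : closure (Set.range T) = (T.kerᗮ : Set H) := by
    rw [T.orthogonal_ker, hT.adjoint_eq, Submodule.topologicalClosure_coe]
    rfl
  rw [hcl, SetLike.mem_coe, Submodule.mem_orthogonal]
  intro y (hy : T y = 0)
  rw [← h.1.inner_left_eq_inner_right, h.apply_eq_zero (by simp [hy]), inner_zero_left]

end IsSqrtOf

namespace ContinuousLinearMap

theorem IsPositive.exists_isSqrtOf {T : H →L[ℂ] H} (hT : T.IsPositive) : ∃ S, IsSqrtOf S T :=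
  ⟨CFC.sqrt T, (nonneg_iff_isPositive _).mp (CFC.sqrt_nonneg T),
    CFC.sqrt_mul_sqrt_self T ((nonneg_iff_isPositive T).mpr hT)⟩

theorem IsPositive.apply_eq_zero {T : H →L[ℂ] H} (hT : T.IsPositive) {x : H}
    (hx : (inner ℂ (T x) x : ℂ).re = 0) : T x = 0 := by
  obtain ⟨S, hS⟩ := hT.exists_isSqrtOf
  rw [← hS.2, mul_apply_eq_comp, hS.apply_eq_zero hx, map_zero]

theorem re_inner_map_map_of_mem_unitary {X u : H →L[ℂ] H} (hu : u ∈ unitary (H →L[ℂ] H))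
    (hXu : Commute X u) (x : H) :
    (inner ℂ (X (u x)) (u x) : ℂ).re = (inner ℂ (X x) x : ℂ).re := by
  rw [← mul_apply_eq_comp, hXu.eq, mul_apply_eq_comp, inner_map_map_of_mem_unitary hu]

theorem ext_of_ker_of_range {A B G : H →L[ℂ] H} (hG : IsSelfAdjoint G)
    (hker : ∀ x ∈ G.ker, A x = B x) (hrange : ∀ x, A (G x) = B (G x)) : A = B := by
  ext x
  obtain ⟨p, hp, q, hq, rfl⟩ := G.ker.exists_add_mem_mem_orthogonal x
  rw [G.orthogonal_ker, hG.adjoint_eq] at hq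
  have hle : G.range.topologicalClosure ≤ (A - B).ker :=
    Submodule.topologicalClosure_minimal _ (by rintro _ ⟨y, rfl⟩; simp [hrange])
      (A - B).isClosed_ker
  have hq' : (A - B) q = 0 := hle hq
  rw [sub_apply, sub_eq_zero] at hq'
  rw [map_add, map_add, hker p hp, hq']

end ContinuousLinearMap

theorem parallelSumValues_map_unitary {X G u : H →L[ℂ] H} (hu : u ∈ unitary (H →L[ℂ] H))
    (hXu : Commute X u) (hGu : Commute G u) (h : H) :
    parallelSumValues X G (u h) = parallelSumValues X G h := by
  have hu' (x : H) : u (star u x) = x := by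
    rw [← mul_apply_eq_comp, Unitary.mul_star_self_of_mem hu, one_apply_eq_self]
  refine Set.ext fun r => ⟨?_, ?_⟩
  · rintro ⟨f, g, hfg, rfl⟩
    refine ⟨star u f, star u g, ?_, ?_⟩
    · rw [← map_add, hfg, ← mul_apply_eq_comp, Unitary.star_mul_self_of_mem hu,
        one_apply_eq_self]
    · rw [← X.re_inner_map_map_of_mem_unitary hu hXu (star u f),
        ← G.re_inner_map_map_of_mem_unitary hu hGu (star u g), hu', hu']
  · rintro ⟨f, g, rfl, rfl⟩
    exact ⟨u f, u g, (map_add u f g).symm, by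
      rw [X.re_inner_map_map_of_mem_unitary hu hXu, G.re_inner_map_map_of_mem_unitary hu hGu]⟩

namespace IsParallelSum

variable {X G P : H →L[ℂ] H}

theorem commute_of_mem_unitary (hP : IsParallelSum X G P) {u : H →L[ℂ] H}
    (hu : u ∈ unitary (H →L[ℂ] H)) (hXu : Commute X u) (hGu : Commute G u) : Commute u P := by
  have hform (h : H) : (inner ℂ (P (u h)) (u h) : ℂ).re = (inner ℂ (P h) h : ℂ).re :=
    (hP.isGLB (u h)).unique (parallelSumValues_map_unitary hu hXu hGu h ▸ hP.isGLB h)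
  have hreal (y : H) : (inner ℂ (P y) y : ℂ) = ((inner ℂ (P y) y : ℂ).re : ℂ) :=
    (hP.1.isSymmetric.coe_reApplyInnerSelf_apply y).symm
  rw [commute_unitary_iff_star_left_conjugate hu]
  apply ContinuousLinearMap.coe_injective
  rw [← ext_inner_map]
  intro x
  simp only [ContinuousLinearMap.coe_coe, mul_apply_eq_comp,
    ContinuousLinearMap.star_eq_adjoint, ContinuousLinearMap.adjoint_inner_left]
  rw [hreal, hreal x, hform]

theorem commute_of_isSelfAdjoint (hP : IsParallelSum X G P) {B : H →L[ℂ] H}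
    (hB : IsSelfAdjoint B) (hXB : Commute X B) (hGB : Commute G B) : Commute B P := by
  set a : H →L[ℂ] H := (‖B‖ + 1)⁻¹ • B
  have ha : IsSelfAdjoint a := (IsSelfAdjoint.all _).smul hB
  have ha_norm : ‖a‖ ≤ 1 := by
    rw [norm_smul, norm_inv, Real.norm_of_nonneg (by positivity), inv_mul_le_one₀ (by positivity)]
    linarith
  set s := CFC.sqrt (1 - a ^ 2)
  have hs : IsSelfAdjoint s := (CFC.sqrt_nonneg _).isSelfAdjoint
  have hcomm {Y : H →L[ℂ] H} (hY : Commute Y B) :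
      Commute Y (a + Complex.I • s) ∧ Commute Y (a - Complex.I • s) := by
    have hYa : Commute Y a := hY.smul_right _
    have hYs : Commute Y s := by
      rw [show s = cfc NNReal.sqrt (1 - a ^ 2) from CFC.sqrt_eq_cfc]
      exact (((Commute.one_right Y).sub_right (hYa.pow_right 2)).symm.cfc_nnreal _).symm
    exact ⟨hYa.add_right (hYs.smul_right _), hYa.sub_right (hYs.smul_right _)⟩
  have hu := ha.self_add_I_smul_cfcSqrt_sub_sq_mem_unitary a ha_norm
  have hstar : star (a + Complex.I • s) = a - Complex.I • s := by
    simp [ha.star_eq, hs.star_eq, sub_eq_add_neg]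
  have h1 := hP.commute_of_mem_unitary hu (hcomm hXB).1 (hcomm hGB).1
  have h2 := hP.commute_of_mem_unitary (hstar ▸ Unitary.star_mem hu) (hcomm hXB).2 (hcomm hGB).2
  have h3 := (h1.add_left h2).smul_left (2 * (‖B‖ + 1)⁻¹)⁻¹
  rwa [add_add_sub_cancel, ← two_smul ℝ a, smul_smul, smul_smul, mul_assoc,
    inv_mul_cancel₀ (by positivity), one_smul] at h3

theorem le_left_s7 (hP : IsParallelSum X G P) (hX : IsSelfAdjoint X) : P ≤ X := by
  rw [ContinuousLinearMap.le_def, ContinuousLinearMap.isPositive_def']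
  refine ⟨hX.sub hP.1.isSelfAdjoint, fun h => ?_⟩
  rw [ContinuousLinearMap.reApplyInnerSelf_apply, sub_apply, inner_sub_left, map_sub, sub_nonneg]
  simpa using hP.re_inner_le (f := h) (g := 0)

theorem apply_eq_zero_of_apply_eq_zero (hP : IsParallelSum X G P) {k : H} (hk : G k = 0) :
    P k = 0 := by
  refine hP.1.apply_eq_zero (le_antisymm ?_ (hP.1.re_inner_nonneg_left k))
  simpa [hk] using hP.re_inner_le (f := 0) (g := k)

end IsParallelSum

namespace IsMuOrbit

variable {G : H →L[ℂ] H} {F : ℕ → H →L[ℂ] H}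

theorem isPositive_and_commute (hF : IsMuOrbit G F) (hG : G.IsPositive) (h0 : (F 0).IsPositive)
    (hc : Commute (F 0) G) (n : ℕ) : (F n).IsPositive ∧ Commute (F n) G := by
  induction n with
  | zero => exact ⟨h0, hc⟩
  | succ n ih =>
    obtain ⟨P, hP, hsucc⟩ := hF n
    rw [hsucc]
    exact ⟨hP.le_left_s7 ih.1.isSelfAdjoint,
      ih.2.sub_left (hP.commute_of_isSelfAdjoint hG.isSelfAdjoint ih.2 (.refl G)).symm⟩

theorem apply_of_apply_eq_zero (hF : IsMuOrbit G F) {k : H} (hk : G k = 0) (n : ℕ) :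
    F n k = F 0 k := by
  induction n with
  | zero => rfl
  | succ n ih =>
    obtain ⟨P, hP, hsucc⟩ := hF n
    rw [hsucc, sub_apply, hP.apply_eq_zero_of_apply_eq_zero hk, sub_zero, ih]

end IsMuOrbit

theorem ContinuousLinearMap.IsPositive.mul_eq_zero_of_isParallelSum_zero {L G : H →L[ℂ] H}
    (hL : L.IsPositive) (hG : G.IsPositive) (hc : Commute L G) (h0 : IsParallelSum L G 0) :
    L * G = 0 := by
  obtain ⟨SL, hSL⟩ := hL.exists_isSqrtOf
  obtain ⟨SG, hSG⟩ := hG.exists_isSqrtOf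
  ext u
  rw [mul_apply_eq_comp, zero_apply]
  have hglb : IsGLB (parallelSumValues L G (G u)) 0 := by simpa using h0.isGLB (G u)
  have key (ε : ℝ) (hε : 0 < ε) : ‖SL (G u)‖ ^ 2 ≤ (‖SL (G u)‖ + ‖SG (L u)‖) * ε := by
    obtain ⟨_, ⟨f, g, hfg, rfl⟩, -, hv⟩ := hglb.exists_between (pow_pos hε 2)
    rw [hSL.re_inner_apply_self_s7, hSG.re_inner_apply_self_s7] at hv
    have hf : ‖SL f‖ < ε := lt_of_pow_lt_pow_left₀ 2 hε.le (by nlinarith [sq_nonneg ‖SG g‖])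
    have hg : ‖SG g‖ < ε := lt_of_pow_lt_pow_left₀ 2 hε.le (by nlinarith [sq_nonneg ‖SL f‖])
    have hLf : inner ℂ (L (G u)) f = inner ℂ (SL (G u)) (SL f) := by
      rw [← hSL.2, mul_apply_eq_comp, hSL.1.inner_left_eq_inner_right]
    have hLg : inner ℂ (L (G u)) g = inner ℂ (SG (L u)) (SG g) := by
      rw [← mul_apply_eq_comp, hc.eq, ← hSG.2, mul_apply_eq_comp, mul_apply_eq_comp,
        hSG.1.inner_left_eq_inner_right]
    have hsplit : ‖SL (G u)‖ ^ 2 = (inner ℂ (SL (G u)) (SL f) : ℂ).re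
        + (inner ℂ (SG (L u)) (SG g) : ℂ).re := by
      rw [← hSL.re_inner_apply_self_s7, ← Complex.add_re, ← hLf, ← hLg, ← inner_add_right, hfg]
    calc ‖SL (G u)‖ ^ 2 ≤ ‖SL (G u)‖ * ‖SL f‖ + ‖SG (L u)‖ * ‖SG g‖ := by
          rw [hsplit]
          exact add_le_add ((Complex.re_le_norm _).trans (norm_inner_le_norm _ _))
            ((Complex.re_le_norm _).trans (norm_inner_le_norm _ _))
      _ ≤ (‖SL (G u)‖ + ‖SG (L u)‖) * ε := by
          rw [add_mul]
          exact add_le_add (mul_le_mul_of_nonneg_left hf.le (norm_nonneg _))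
            (mul_le_mul_of_nonneg_left hg.le (norm_nonneg _))
  have hlim : Tendsto (fun ε => (‖SL (G u)‖ + ‖SG (L u)‖) * ε) (𝓝[>] 0) (𝓝 0) := by
    simpa using tendsto_nhdsWithin_of_tendsto_nhds
      ((continuous_const_mul (‖SL (G u)‖ + ‖SG (L u)‖)).tendsto 0)
  have hzero : ‖SL (G u)‖ ^ 2 ≤ 0 := ge_of_tendsto hlim (eventually_nhdsWithin_of_forall key)
  have hSLGu : SL (G u) = 0 :=
    norm_eq_zero.mp (pow_eq_zero_iff two_ne_zero |>.mp (le_antisymm hzero (by positivity)))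
  rw [← hSL.2, mul_apply_eq_comp, hSLGu, map_zero]

namespace IsTau

variable {G X L : H →L[ℂ] H}

theorem apply_of_apply_eq_zero (hL : IsTau G X L) {k : H} (hk : G k = 0) : L k = X k := by
  obtain ⟨F, rfl, hF, hlim⟩ := hL
  refine tendsto_nhds_unique (hlim k) ?_
  simp only [hF.apply_of_apply_eq_zero hk, tendsto_const_nhds]

theorem mul_eq_zero (hL : IsTau G X L) (hG : G.IsPositive) (hX : X.IsPositive)
    (hc : Commute X G) : L * G = 0 := by
  obtain ⟨F, rfl, hF, hlim⟩ := hL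
  have hFpos n := hF.isPositive_and_commute hG hX hc n
  have hLpos := ContinuousLinearMap.isPositive_of_tendsto_s7 (fun n => (hFpos n).1) hlim
  have hLc := Commute.of_tendsto (fun n => (hFpos n).2) hlim
  have hL_le (n : ℕ) : L ≤ F n :=
    ContinuousLinearMap.isPositive_of_tendsto_s7 (T := fun m => F n - F (n + m))
      (fun m => hF.antitone (Nat.le_add_right n m))
      (fun x => tendsto_const_nhds.sub ((hlim x).comp (tendsto_add_atTop_nat n))
        |>.congr fun m => by simp [add_comm])
  refine hLpos.mul_eq_zero_of_isParallelSum_zero hG hLc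
    ⟨ContinuousLinearMap.isPositive_zero, fun h => ?_⟩
  rw [zero_apply, inner_zero_left, Complex.zero_re]
  choose P hP hsucc using hF
  -- every lower bound of the values of `L : G` is below the increments `F n : G = F n - F (n + 1)`
  have hincr : Tendsto (fun n => (inner ℂ (P n h) h : ℂ).re) atTop (𝓝 0) := by
    have hform := (Complex.continuous_re.tendsto _).comp
      ((hlim h).inner (tendsto_const_nhds (x := h)))
    have hP_eq (n : ℕ) : P n = F n - F (n + 1) := by rw [hsucc n, sub_sub_cancel]
    simpa [Function.comp_def, hP_eq, inner_sub_left] using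
      hform.sub (hform.comp (tendsto_add_atTop_nat 1))
  refine ⟨?_, fun c hc => ge_of_tendsto' hincr fun n => (hP n).isGLB h |>.2 ?_⟩
  · rintro _ ⟨f, g, -, rfl⟩
    exact add_nonneg (hLpos.re_inner_nonneg_left f) (hG.re_inner_nonneg_left g)
  · rintro _ ⟨f, g, hfg, rfl⟩
    exact (hc ⟨f, g, hfg, rfl⟩).trans
      (add_le_add_left (ContinuousLinearMap.re_inner_le_re_inner_of_le (hL_le n) f) _)

end IsTau

/-- Corollary 1 of the paper. If `F₀` commutes with `G`, then
`τ_G(F₀) = F₀^{1/2} P_N F₀^{1/2}` with `N = ker G ∩ clos ran F₀`; in particular `τ_G(F₀) = 0`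
if `ker G ⊆ ker F₀`, or `F₀ = G`, or `ker G = {0}`. -/
theorem stmt7 (G F₀ Sf0 F Pn : H →L[ℂ] H)
    (hG : G.IsPositive) (hF₀ : F₀.IsPositive)
    (hcomm : F₀ * G = G * F₀)
    (hSf0 : IsSqrtOf Sf0 F₀)
    (hF : IsTau G F₀ F)
    (N : Submodule ℂ H)
    (hN : (N : Set H) = {x : H | G x = 0} ∩ closure (Set.range ⇑F₀))
    (hPn : IsOrthProjOnto N Pn) :
    F = Sf0 * Pn * Sf0 ∧
    ({x : H | G x = 0} ⊆ {x : H | F₀ x = 0} → F = 0) ∧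
    (F₀ = G → F = 0) ∧
    ((∀ x : H, G x = 0 → x = 0) → F = 0) := by
  have hFG : F * G = 0 := hF.mul_eq_zero hG hF₀ hcomm
  have hSG : Commute Sf0 G := hSf0.commute hcomm
  have hvanish (hker : {x : H | G x = 0} ⊆ {x : H | F₀ x = 0}) : F = 0 :=
    ContinuousLinearMap.ext_of_ker_of_range hG.isSelfAdjoint
      (fun k hk => by simpa [hF.apply_of_apply_eq_zero hk] using hker hk)
      (fun x => by rw [← mul_apply_eq_comp, hFG]; rfl)
  refine ⟨?_, hvanish, fun h => hvanish (h ▸ subset_rfl), fun h => hvanish fun x hx => ?_⟩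
  · refine ContinuousLinearMap.ext_of_ker_of_range hG.isSelfAdjoint (fun k (hk : G k = 0) => ?_)
      fun x => ?_
    · have hSk : Sf0 k ∈ N := by
        rw [← SetLike.mem_coe, hN]
        refine ⟨?_, hSf0.mem_closure_range k⟩
        rw [Set.mem_ofPred_eq, ← mul_apply_eq_comp, ← hSG.eq, mul_apply_eq_comp, hk, map_zero]
      rw [hF.apply_of_apply_eq_zero hk, mul_apply_eq_comp, mul_apply_eq_comp,
        hPn.apply_of_mem hSk, ← mul_apply_eq_comp, hSf0.2]
    · have hNker (z : H) (hz : z ∈ N) : G z = 0 := (hN ▸ SetLike.mem_coe.mpr hz).1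
      rw [← mul_apply_eq_comp F, hFG, mul_apply_eq_comp, mul_apply_eq_comp,
        ← mul_apply_eq_comp Sf0 G, hSG.eq, mul_apply_eq_comp,
        hPn.apply_map_eq_zero hG.isSymmetric hNker, map_zero, zero_apply]
  · simp [h x hx]
end

section
/- Let G, F_0 ∈ B^+(H). If ran F_0^{1/2} ⊆ ran G^{1/2}, then τ_G(F_0) = 0. -/
open Filter Topology

variable {H : Type*} [NormedAddCommGroup H] [InnerProductSpace ℂ H] [CompleteSpace H]

/-!
By Douglas' lemma the inclusion `ran F₀^{1/2} ⊆ ran G^{1/2}` gives `‖F₀^{1/2} x‖ ≤ k ‖G^{1/2} x‖`,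
i.e. `F₀ ≤ k² G`. The iterates `Fₙ` of `μ_G` decrease, so `Fₙ ≤ c G` with `c = k²` for all `n`.
Whenever `X ≤ c G`, splitting `h = f + g` and using `⟪X(f+g), f+g⟫ ≤ 2⟪Xf, f⟫ + 2⟪Xg, g⟫` gives
`X : G ≥ X / (2(1 + c))`, so `μ_G` shrinks the quadratic form of `Fₙ` by the fixed factor
`1 - 1/(2(1 + c))`. The forms of `Fₙ` therefore tend to `0`, and so does that of their strong
limit `τ_G(F₀)`, which is then `0`.
-/

namespace ContinuousLinearMap

variable {𝕜 V : Type*} [RCLike 𝕜] [NormedAddCommGroup V] [InnerProductSpace 𝕜 V] [CompleteSpace V]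

lemma exists_mem_orthogonal_ker_apply_eq {F : Type*} [NormedAddCommGroup F] [NormedSpace 𝕜 F]
    (B : V →L[𝕜] F) (z : V) :
    ∃ y ∈ B.kerᗮ, B y = B z :=
  ⟨z - B.ker.starProjection z, B.ker.sub_starProjection_mem_orthogonal z, by
    rw [map_sub, sub_eq_self]
    exact B.ker.starProjection_apply_mem z⟩

/-- Douglas' factorization lemma. -/
theorem exists_comp_eq_of_range_subset {E F : Type*} [NormedAddCommGroup E] [NormedSpace 𝕜 E]
    [CompleteSpace E] [NormedAddCommGroup F] [NormedSpace 𝕜 F] (A : E →L[𝕜] F) (B : V →L[𝕜] F)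
    (hAB : Set.range A ⊆ Set.range B) : ∃ C : E →L[𝕜] V, B ∘L C = A := by
  set K := B.kerᗮ
  let BK := (B : V →ₗ[𝕜] F).domRestrict K
  have hBK : Function.Injective BK :=
    LinearMap.injective_domRestrict_iff.2 (Submodule.orthogonal_disjoint _).symm
  have hA : ∀ x, A x ∈ LinearMap.range BK := fun x => by
    obtain ⟨z, hz⟩ := hAB ⟨x, rfl⟩
    obtain ⟨y, hyK, hy⟩ := B.exists_mem_orthogonal_ker_apply_eq z
    exact ⟨⟨y, hyK⟩, hy.trans hz⟩
  -- `C x` is the unique preimage of `A x` in `(ker B)ᗮ`; it is continuous by the closed graph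
  -- theorem.
  let C : E →ₗ[𝕜] V :=
    K.subtype ∘ₗ (LinearEquiv.ofInjective BK hBK).symm ∘ₗ (A : E →ₗ[𝕜] F).codRestrict _ hA
  have hBC : ∀ x, B (C x) = A x := fun x =>
    congrArg Subtype.val ((LinearEquiv.ofInjective BK hBK).apply_symm_apply ⟨A x, hA x⟩)
  have hCK : ∀ x, C x ∈ K := fun x => Subtype.property _
  refine ⟨⟨C, C.continuous_of_seq_closed_graph fun u x y hu hCu => ?_⟩, ext hBC⟩
  have hyK : y ∈ K := B.ker.isClosed_orthogonal.mem_of_tendsto hCu (.of_forall fun n => hCK (u n))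
  have hBy : B y = B (C x) := by
    refine tendsto_nhds_unique ((B.continuous.tendsto y).comp hCu) ?_
    simpa only [Function.comp_def, hBC] using (A.continuous.tendsto x).comp hu
  exact congrArg Subtype.val (@hBK ⟨y, hyK⟩ ⟨C x, hCK x⟩ hBy)

theorem exists_norm_adjoint_apply_le_mul_norm_adjoint_apply {E F : Type*}
    [NormedAddCommGroup E] [InnerProductSpace 𝕜 E] [CompleteSpace E]
    [NormedAddCommGroup F] [InnerProductSpace 𝕜 F] [CompleteSpace F] (A : E →L[𝕜] F) (B : V →L[𝕜] F) (hAB : Set.range A ⊆ Set.range B) :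
    ∃ k : ℝ, ∀ y, ‖adjoint A y‖ ≤ k * ‖adjoint B y‖ := by
  obtain ⟨C, rfl⟩ := exists_comp_eq_of_range_subset A B hAB
  refine ⟨‖adjoint C‖, fun y => ?_⟩
  rw [adjoint_comp, comp_apply]
  exact (adjoint C).le_opNorm _

theorem IsPositive.reApplyInnerSelf_add_le {E : Type*} [NormedAddCommGroup E]
    [InnerProductSpace 𝕜 E] {T : E →L[𝕜] E} (hT : T.IsPositive) (f g : E) :
    T.reApplyInnerSelf (f + g) ≤ 2 * (T.reApplyInnerSelf f + T.reApplyInnerSelf g) := by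
  have hpar : T.reApplyInnerSelf (f + g) + T.reApplyInnerSelf (f - g)
      = 2 * (T.reApplyInnerSelf f + T.reApplyInnerSelf g) := by
    simp only [reApplyInnerSelf_apply, map_add, map_sub, inner_add_left, inner_add_right,
      inner_sub_left, inner_sub_right]
    ring
  linarith [hT.2 (f - g)]

theorem eq_zero_of_tendsto_reApplyInnerSelf {E : Type*} [NormedAddCommGroup E]
    [InnerProductSpace ℂ E] {T : ℕ → E →L[ℂ] E} {L : E →L[ℂ] E} (hT : ∀ n, (T n).IsSymmetric)
    (hTL : ∀ x, Tendsto (fun n => T n x) atTop (𝓝 (L x)))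
    (hT0 : ∀ x, Tendsto (fun n => (T n).reApplyInnerSelf x) atTop (𝓝 0)) : L = 0 := by
  refine coe_inj.1 <| (inner_map_self_eq_zero _).1 fun x => tendsto_nhds_unique
    ((hTL x).inner tendsto_const_nhds) ?_
  simp_rw [← (hT _).coe_reApplyInnerSelf_apply]
  simpa [Function.comp_def] using ((RCLike.continuous_ofReal (K := ℂ)).tendsto 0).comp (hT0 x)

end ContinuousLinearMap

open ContinuousLinearMap

lemma IsSqrtOf.reApplyInnerSelf_eq {S X : H →L[ℂ] H} (hS : IsSqrtOf S X) (x : H) :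
    X.reApplyInnerSelf x = ‖S x‖ ^ 2 := by
  rw [apply_norm_sq_eq_inner_adjoint_left, hS.1.isSelfAdjoint.adjoint_eq, ← hS.2]
  rfl

namespace IsParallelSum

variable {E : Type*} [NormedAddCommGroup E] [InnerProductSpace ℂ E] {X G P : E →L[ℂ] E}

lemma reApplyInnerSelf_le (hP : IsParallelSum X G P) (h : E) :
    P.reApplyInnerSelf h ≤ X.reApplyInnerSelf h :=
  (hP.2 h).1 ⟨h, 0, add_zero h, by simp [reApplyInnerSelf_apply]⟩

lemma isPositive_sub (hX : X.IsPositive) (hP : IsParallelSum X G P) : (X - P).IsPositive :=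
  ⟨hX.1.sub hP.1.1, fun h => by
    simpa [reApplyInnerSelf_apply, inner_sub_left] using sub_nonneg.2 (hP.reApplyInnerSelf_le h)⟩

lemma reApplyInnerSelf_le_mul (hX : X.IsPositive) (hG : G.IsPositive) {c : ℝ} (hc : 0 ≤ c)
    (hXG : ∀ g, X.reApplyInnerSelf g ≤ c * G.reApplyInnerSelf g) (hP : IsParallelSum X G P)
    (h : E) : X.reApplyInnerSelf h ≤ 2 * (1 + c) * P.reApplyInnerSelf h := by
  rw [← div_le_iff₀' (by positivity)]
  refine (hP.2 h).2 ?_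
  rintro _ ⟨f, g, rfl, rfl⟩
  rw [div_le_iff₀' (by positivity)]
  change _ ≤ _ * (X.reApplyInnerSelf f + G.reApplyInnerSelf g)
  have := hX.reApplyInnerSelf_add_le f g
  have := hXG g
  nlinarith [hX.2 f, hG.2 g]

lemma reApplyInnerSelf_sub_le (hX : X.IsPositive) (hG : G.IsPositive) {c : ℝ} (hc : 0 ≤ c)
    (hXG : ∀ g, X.reApplyInnerSelf g ≤ c * G.reApplyInnerSelf g) (hP : IsParallelSum X G P)
    (h : E) : (X - P).reApplyInnerSelf h ≤ (1 - (2 * (1 + c))⁻¹) * X.reApplyInnerSelf h := by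
  have hM : 0 < 2 * (1 + c) := by positivity
  have hPX := hP.reApplyInnerSelf_le_mul hX hG hc hXG h
  rw [← div_le_iff₀' hM] at hPX
  simp only [reApplyInnerSelf_apply, sub_apply, inner_sub_left, map_sub] at hPX ⊢
  rw [sub_mul, one_mul, inv_mul_eq_div]
  linarith

end IsParallelSum

namespace IsMuOrbit

variable {E : Type*} [NormedAddCommGroup E] [InnerProductSpace ℂ E] {G : E →L[ℂ] E}
  {F : ℕ → E →L[ℂ] E} {c : ℝ}

lemma isPositive_and_reApplyInnerSelf_le (hF : IsMuOrbit G F) (hG : G.IsPositive)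
    (hF₀ : (F 0).IsPositive) (hc : 0 ≤ c)
    (hF₀G : ∀ g, (F 0).reApplyInnerSelf g ≤ c * G.reApplyInnerSelf g) (n : ℕ) :
    (F n).IsPositive ∧
      ∀ h, (F n).reApplyInnerSelf h ≤ (1 - (2 * (1 + c))⁻¹) ^ n * (F 0).reApplyInnerSelf h := by
  set r := 1 - (2 * (1 + c))⁻¹
  have hr₀ : 0 ≤ r := sub_nonneg.2 (inv_le_one_of_one_le₀ (by linarith))
  have hr₁ : r ≤ 1 := sub_le_self _ (by positivity)
  induction n with
  | zero => exact ⟨hF₀, fun h => by rw [pow_zero, one_mul]⟩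
  | succ n ih =>
    obtain ⟨hpos, hle⟩ := ih
    obtain ⟨P, hP, hstep⟩ := hF n
    have hFG : ∀ g, (F n).reApplyInnerSelf g ≤ c * G.reApplyInnerSelf g := fun g =>
      ((hle g).trans (mul_le_of_le_one_left (hF₀.2 g) (pow_le_one₀ hr₀ hr₁))).trans (hF₀G g)
    rw [hstep]
    refine ⟨hP.isPositive_sub hpos, fun h => ?_⟩
    calc (F n - P).reApplyInnerSelf h ≤ r * (F n).reApplyInnerSelf h :=
          hP.reApplyInnerSelf_sub_le hpos hG hc hFG h
      _ ≤ r * (r ^ n * (F 0).reApplyInnerSelf h) := mul_le_mul_of_nonneg_left (hle h) hr₀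
      _ = r ^ (n + 1) * (F 0).reApplyInnerSelf h := by ring

lemma tendsto_reApplyInnerSelf_zero (hF : IsMuOrbit G F) (hG : G.IsPositive)
    (hF₀ : (F 0).IsPositive) (hc : 0 ≤ c)
    (hF₀G : ∀ g, (F 0).reApplyInnerSelf g ≤ c * G.reApplyInnerSelf g) (h : E) :
    Tendsto (fun n => (F n).reApplyInnerSelf h) atTop (𝓝 0) := by
  have hF := hF.isPositive_and_reApplyInnerSelf_le hG hF₀ hc hF₀G
  have hr₀ : 0 ≤ 1 - (2 * (1 + c))⁻¹ := sub_nonneg.2 (inv_le_one_of_one_le₀ (by linarith))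
  have hr₁ : 1 - (2 * (1 + c))⁻¹ < 1 := sub_lt_self _ (by positivity)
  refine squeeze_zero (fun n => (hF n).1.2 h) (fun n => (hF n).2 h) ?_
  simpa using (tendsto_pow_atTop_nhds_zero_of_lt_one hr₀ hr₁).mul_const ((F 0).reApplyInnerSelf h)

end IsMuOrbit

/-- If `ran F₀^{1/2} ⊆ ran G^{1/2}`, then `τ_G(F₀) = 0`. -/
theorem stmt9 (G F₀ Sf0 Sg L : H →L[ℂ] H)
    (hG : G.IsPositive) (hF₀ : F₀.IsPositive)
    (hSf0 : IsSqrtOf Sf0 F₀) (hSg : IsSqrtOf Sg G)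
    (hran : Set.range ⇑Sf0 ⊆ Set.range ⇑Sg)
    (hL : IsTau G F₀ L) :
    L = 0 := by
  obtain ⟨k, hk⟩ := exists_norm_adjoint_apply_le_mul_norm_adjoint_apply Sf0 Sg hran
  simp only [hSf0.1.isSelfAdjoint.adjoint_eq, hSg.1.isSelfAdjoint.adjoint_eq] at hk
  have hF₀G : ∀ g, F₀.reApplyInnerSelf g ≤ k ^ 2 * G.reApplyInnerSelf g := fun g => by
    rw [hSf0.reApplyInnerSelf_eq, hSg.reApplyInnerSelf_eq, ← mul_pow]
    exact pow_le_pow_left₀ (norm_nonneg _) (hk g) 2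
  obtain ⟨F, rfl, hF, hFL⟩ := hL
  exact eq_zero_of_tendsto_reApplyInnerSelf
    (fun n => (hF.isPositive_and_reApplyInnerSelf_le hG hF₀ (sq_nonneg k) hF₀G n).1.1) hFL
    (hF.tendsto_reApplyInnerSelf_zero hG hF₀ (sq_nonneg k) hF₀G)
end

section
/- Let G, F_0 ∈ B^+(H) and λ > 0. Let M_λ be the orthogonal complement in H of closure{ g ∈ H : (λG+F_0)^{1/2} g ∈ ran G^{1/2} } and N the orthogonal complement in H of closure{ g ∈ H : F_0^{1/2} g ∈ ran G^{1/2} }. Then (λG+F_0)^{1/2} P_{M_λ} (λG+F_0)^{1/2} = F_0^{1/2} P_N F_0^{1/2}, where P_{M_λ} and P_N are the orthogonal projections onto M_λ and N. -/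
open Filter Topology

variable {H : Type*} [NormedAddCommGroup H] [InnerProductSpace ℂ H] [CompleteSpace H]

/-!
Write `S = (λG + F₀)^{1/2}`. Since `S² = λG + F₀`, `‖S x‖² = λ‖G^{1/2} x‖² + ‖F₀^{1/2} x‖²`, so by
Douglas' lemma `G^{1/2} = F S` and `F₀^{1/2} = D S` with `D`, `F` vanishing on `ker S`; then
`S (D*D + λF*F) = S`. Let `V = {g : S g ∈ ran G^{1/2}}` and `W = {g : F₀^{1/2} g ∈ ran G^{1/2}}`, so
that `M_λ = Vᗮ` and `N = Wᗮ`. Then `F` vanishes on `Vᗮ`, while `D` maps `V` into `W` and `D*` maps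
`W` into `V`, so `P_N D = D P_{M_λ}`. Hence
`F₀^{1/2} P_N F₀^{1/2} = S D* P_N D S = S D*D P_{M_λ} S = S (D*D + λF*F) P_{M_λ} S = S P_{M_λ} S`.
-/

open ContinuousLinearMap
open scoped InnerProduct

section Projections

variable {𝕜 E F : Type*} [RCLike 𝕜]
  [NormedAddCommGroup E] [InnerProductSpace 𝕜 E] [CompleteSpace E]
  [NormedAddCommGroup F] [InnerProductSpace 𝕜 F] [CompleteSpace F]

theorem ContinuousLinearMap.exists_comp_eq_of_norm_le {X G : Type*} [NormedAddCommGroup X]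
    [NormedSpace 𝕜 X] [NormedAddCommGroup G] [NormedSpace 𝕜 G] [CompleteSpace G]
    (A : X →L[𝕜] F) (B : X →L[𝕜] G) {C : ℝ} (hBA : ∀ x, ‖B x‖ ≤ C * ‖A x‖) :
    ∃ T : F →L[𝕜] G, T ∘L A = B ∧ ∀ y ∈ A.rangeᗮ, T y = 0 := by
  set K := A.range.topologicalClosure
  let e : X →ₗ[𝕜] K := (A : X →ₗ[𝕜] F).codRestrict K
    fun x => A.range.le_topologicalClosure ⟨x, rfl⟩
  have he : DenseRange e := by
    intro y
    rw [closure_subtype, ← Set.range_comp]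
    exact y.2
  refine ⟨(B : X →ₗ[𝕜] G).extendOfNorm e ∘L K.orthogonalProjectionOnto, ?_, fun y hy => ?_⟩
  · ext x
    have hx : K.orthogonalProjectionOnto (A x) = e x :=
      K.orthogonalProjectionOnto_mem_subspace_eq_self (e x)
    simp only [comp_apply, hx]
    exact LinearMap.extendOfNorm_eq he ⟨C, hBA⟩ x
  · have hyK : y ∈ Kᗮ := by rwa [Submodule.orthogonal_closure]
    rw [comp_apply, K.orthogonalProjectionOnto_eq_zero_iff.2 hyK, map_zero]

theorem ContinuousLinearMap.mapsTo_adjoint_orthogonal (D : E →L[𝕜] F) {V : Submodule 𝕜 E}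
    {W : Submodule 𝕜 F} (h : Set.MapsTo D V W) : Set.MapsTo (D†) Wᗮ Vᗮ := by
  intro z hz
  rw [SetLike.mem_coe, Submodule.mem_orthogonal]
  intro v hv
  rw [adjoint_inner_right]
  exact Submodule.inner_right_of_mem_orthogonal (h hv) hz

theorem ContinuousLinearMap.starProjection_orthogonal_comp_eq_of_mapsTo (D : E →L[𝕜] F)
    {V : Submodule 𝕜 E} {W : Submodule 𝕜 F} (hV : Set.MapsTo D V W) (hW : Set.MapsTo (D†) W V) :
    Wᗮ.starProjection ∘L D = D ∘L Vᗮ.starProjection := by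
  have hVW : Set.MapsTo D Vᗮᗮ Wᗮᗮ := by
    simpa using (D†).mapsTo_adjoint_orthogonal (D.mapsTo_adjoint_orthogonal hV)
  have hWV : Set.MapsTo D Vᗮ Wᗮ := by
    simpa using (D†).mapsTo_adjoint_orthogonal hW
  ext x
  refine Wᗮ.eq_starProjection_of_mem_orthogonal (hWV (Vᗮ.starProjection_apply_mem x)) ?_
  simpa using hVW (Vᗮ.sub_starProjection_mem_orthogonal x)

end Projections

section Factorization

variable {𝕜 E : Type*} [RCLike 𝕜]
  [NormedAddCommGroup E] [InnerProductSpace 𝕜 E] [CompleteSpace E]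
  {S Sf Sg D F : E →L[𝕜] E} {c : ℝ}

theorem IsSelfAdjoint.norm_apply_sq (hS : IsSelfAdjoint S) (x : E) :
    ‖S x‖ ^ 2 = RCLike.re (inner 𝕜 ((S * S) x) x) := by
  rw [S.apply_norm_sq_eq_inner_adjoint_left, hS.adjoint_eq]
  rfl

theorem IsSelfAdjoint.mul_eq_left_of_mul_mul_eq {T : E →L[𝕜] E} (hS : IsSelfAdjoint S)
    (hT : IsSelfAdjoint T) (hker : ∀ z, S z = 0 → T z = 0) (h : S * T * S = S * S) :
    S * T = S := by
  suffices T * S = S by simpa [hS.star_eq, hT.star_eq] using congr(star $this)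
  ext a
  set w := T (S a) - S a
  have hSw : S w = 0 := by
    simpa [w, sub_eq_zero] using congr($h a)
  -- `w` lies in `ker S` and is orthogonal to it, because `T` and `S` both kill `ker S`.
  have : inner 𝕜 w w = 0 := by
    have hTw := hT.isSymmetric (S a) w
    have hSw' := hS.isSymmetric a w
    simp only [coe_coe] at hTw hSw'
    rw [inner_sub_left, hTw, hSw', hSw, hker w hSw, inner_zero_right, inner_zero_right, sub_zero]
  exact sub_eq_zero.1 (inner_self_eq_zero.1 this)

theorem IsSelfAdjoint.norm_sq_apply_eq_of_mul_self_eq (hS : IsSelfAdjoint S)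
    (hSf : IsSelfAdjoint Sf) (hSg : IsSelfAdjoint Sg) (hsq : S * S = (c : 𝕜) • (Sg * Sg) + Sf * Sf)
    (x : E) : ‖S x‖ ^ 2 = c * ‖Sg x‖ ^ 2 + ‖Sf x‖ ^ 2 := by
  rw [hS.norm_apply_sq, hsq, hSg.norm_apply_sq, hSf.norm_apply_sq]
  simp [inner_add_left, inner_smul_left]

theorem IsSelfAdjoint.exists_factorization_of_mul_self_eq (hS : IsSelfAdjoint S)
    (hSf : IsSelfAdjoint Sf) (hSg : IsSelfAdjoint Sg) (hc : 0 < c)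
    (hsq : S * S = (c : 𝕜) • (Sg * Sg) + Sf * Sf) :
    ∃ D F : E →L[𝕜] E, D * S = Sf ∧ S * star D = Sf ∧ S * star F = Sg ∧
      S * (star D * D + (c : 𝕜) • (star F * F)) = S := by
  have hnorm := hS.norm_sq_apply_eq_of_mul_self_eq hSf hSg hsq
  have hSg_le (x : E) : ‖Sg x‖ ≤ (√c)⁻¹ * ‖S x‖ := by
    rw [inv_mul_eq_div, le_div_iff₀ (Real.sqrt_pos.2 hc)]
    refine (pow_le_pow_iff_left₀ (by positivity) (norm_nonneg _) two_ne_zero).1 ?_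
    rw [mul_pow, Real.sq_sqrt hc.le]
    nlinarith [hnorm x, sq_nonneg ‖Sf x‖]
  have hSf_le (x : E) : ‖Sf x‖ ≤ 1 * ‖S x‖ := by
    rw [one_mul]
    refine (pow_le_pow_iff_left₀ (norm_nonneg _) (norm_nonneg _) two_ne_zero).1 ?_
    nlinarith [hnorm x, sq_nonneg ‖Sg x‖]
  have hker_range : ∀ z, S z = 0 → z ∈ S.rangeᗮ := by
    rw [hS.isStarNormal.orthogonal_range]
    exact fun z hz => hz
  obtain ⟨F, hF : F * S = Sg, hFker⟩ := S.exists_comp_eq_of_norm_le Sg hSg_le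
  obtain ⟨D, hD : D * S = Sf, hDker⟩ := S.exists_comp_eq_of_norm_le Sf hSf_le
  have hDa : S * star D = Sf := by simpa [hS.star_eq, hSf.star_eq] using congr(star $hD)
  have hFa : S * star F = Sg := by simpa [hS.star_eq, hSg.star_eq] using congr(star $hF)
  have hT : IsSelfAdjoint (star D * D + (c : 𝕜) • (star F * F)) :=
    (IsSelfAdjoint.star_mul_self D).add
      (.smul (RCLike.conj_ofReal c) (.star_mul_self F))
  refine ⟨D, F, hD, hDa, hFa, hS.mul_eq_left_of_mul_mul_eq hT ?_ ?_⟩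
  · intro z hz
    simp [hDker z (hker_range z hz), hFker z (hker_range z hz)]
  · calc S * (star D * D + (c : 𝕜) • (star F * F)) * S
          = star (D * S) * (D * S) + (c : 𝕜) • (star (F * S) * (F * S)) := by
            simp only [star_mul, hS.star_eq, mul_add, add_mul, mul_smul_comm, smul_mul_assoc,
              mul_assoc]
        _ = S * S := by rw [hD, hF, hSf.star_eq, hSg.star_eq, hsq, add_comm]

theorem apply_eq_zero_of_mem_orthogonal_comap (hFa : S * star F = Sg) {u : E}
    (hu : u ∈ (Sg.range.comap (S : E →ₗ[𝕜] E))ᗮ) : F u = 0 := by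
  refine ext_inner_left 𝕜 fun k => ?_
  rw [← adjoint_inner_left, inner_zero_right]
  refine Submodule.inner_right_of_mem_orthogonal ?_ hu
  exact ⟨k, by simp [← hFa, star_eq_adjoint]⟩

theorem apply_mem_comap_of_mem_comap (hDa : S * star D = Sf) (hFa : S * star F = Sg)
    (hT : S * (star D * D + (c : 𝕜) • (star F * F)) = S) {g : E}
    (hg : g ∈ Sg.range.comap (S : E →ₗ[𝕜] E)) : D g ∈ Sg.range.comap (Sf : E →ₗ[𝕜] E) := by
  obtain ⟨k, hk : Sg k = S g⟩ := hg
  refine ⟨k - (c : 𝕜) • F g, ?_⟩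
  have hTg : S (star D (D g)) + (c : 𝕜) • S (star F (F g)) = S g := by
    simpa [mul_add] using congr($hT g)
  calc Sg (k - (c : 𝕜) • F g) = S g - (c : 𝕜) • S (star F (F g)) := by
        rw [map_sub, map_smul, hk, ← hFa]
        rfl
    _ = Sf (D g) := by
        rw [← hTg, add_sub_cancel_right, ← hDa]
        rfl

theorem adjoint_apply_mem_comap_of_mem_comap (hDa : S * star D = Sf) {g : E}
    (hg : g ∈ Sg.range.comap (Sf : E →ₗ[𝕜] E)) : (D†) g ∈ Sg.range.comap (S : E →ₗ[𝕜] E) := by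
  obtain ⟨k, hk⟩ := hg
  exact ⟨k, by simpa [← hDa, star_eq_adjoint] using hk⟩

theorem mul_starProjection_orthogonal_comap_mul_eq (hS : IsSelfAdjoint S)
    (hSf : IsSelfAdjoint Sf) (hSg : IsSelfAdjoint Sg) (hc : 0 < c)
    (hsq : S * S = (c : 𝕜) • (Sg * Sg) + Sf * Sf) :
    S * (Sg.range.comap (S : E →ₗ[𝕜] E))ᗮ.starProjection * S =
      Sf * (Sg.range.comap (Sf : E →ₗ[𝕜] E))ᗮ.starProjection * Sf := by
  obtain ⟨D, F, hD, hDa, hFa, hT⟩ := hS.exists_factorization_of_mul_self_eq hSf hSg hc hsq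
  set P := (Sg.range.comap (S : E →ₗ[𝕜] E))ᗮ.starProjection
  set Q := (Sg.range.comap (Sf : E →ₗ[𝕜] E))ᗮ.starProjection
  have hQD : Q * D = D * P := D.starProjection_orthogonal_comp_eq_of_mapsTo
    (fun _ hg => apply_mem_comap_of_mem_comap hDa hFa hT hg)
    (fun _ hg => adjoint_apply_mem_comap_of_mem_comap hDa hg)
  have hFP : F * P = 0 :=
    ext fun x => apply_eq_zero_of_mem_orthogonal_comap hFa (Submodule.starProjection_apply_mem _ x)
  calc S * P * S = S * (star D * D + (c : 𝕜) • (star F * F)) * P * S := by rw [hT]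
    _ = S * star D * (D * P) * S + (c : 𝕜) • (S * star F * (F * P) * S) := by
        simp only [mul_add, add_mul, mul_smul_comm, smul_mul_assoc, mul_assoc]
    _ = Sf * Q * Sf := by
        rw [hFP, ← hQD, hDa, ← hD]
        simp only [mul_zero, zero_mul, smul_zero, add_zero, mul_assoc]

end Factorization

theorem IsOrthProjOnto.eq_starProjection {X : Type*} [NormedAddCommGroup X]
    [InnerProductSpace ℂ X] {M : Submodule ℂ X} [M.HasOrthogonalProjection] {P : X →L[ℂ] X}
    (hP : IsOrthProjOnto M P) : P = M.starProjection :=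
  ext fun x => (M.eq_starProjection_of_mem_orthogonal (hP x).1 (hP x).2).symm

theorem Submodule.orthogonal_eq_of_coe_eq_closure {𝕜 E : Type*} [RCLike 𝕜]
    [NormedAddCommGroup E] [InnerProductSpace 𝕜 E] {K V : Submodule 𝕜 E}
    (h : (K : Set E) = closure V) : Kᗮ = Vᗮ := by
  rw [← V.orthogonal_closure, ← SetLike.coe_set_eq.1 (h.trans V.topologicalClosure_coe.symm)]

theorem stmt11_general (G F₀ Sl Sf0 Sg Pl Pn : H →L[ℂ] H)
    (lam : ℝ) (hlam : 0 < lam)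
    (hSl : IsSqrtOf Sl ((lam : ℂ) • G + F₀))
    (hSf0 : IsSqrtOf Sf0 F₀) (hSg : IsSqrtOf Sg G)
    (Ωl : Submodule ℂ H) (hΩl : (Ωl : Set H) = closure {g : H | Sl g ∈ Set.range ⇑Sg})
    (ΩN : Submodule ℂ H) (hΩN : (ΩN : Set H) = closure {g : H | Sf0 g ∈ Set.range ⇑Sg})
    (hPl : IsOrthProjOnto Ωlᗮ Pl) (hPn : IsOrthProjOnto ΩNᗮ Pn) :
    Sl * Pl * Sl = Sf0 * Pn * Sf0 := by
  rw [Submodule.orthogonal_eq_of_coe_eq_closure (V := Sg.range.comap (Sl : H →ₗ[ℂ] H)) hΩl]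
    at hPl
  rw [Submodule.orthogonal_eq_of_coe_eq_closure (V := Sg.range.comap (Sf0 : H →ₗ[ℂ] H)) hΩN]
    at hPn
  rw [hPl.eq_starProjection, hPn.eq_starProjection]
  refine mul_starProjection_orthogonal_comap_mul_eq hSl.1.isSelfAdjoint hSf0.1.isSelfAdjoint
    hSg.1.isSelfAdjoint hlam ?_
  rw [hSl.2, hSg.2, hSf0.2]
  rfl

/-- Corollary 3 of the paper. For `λ > 0`,
`(λG+F₀)^{1/2} P_{M_λ} (λG+F₀)^{1/2} = F₀^{1/2} P_N F₀^{1/2}`, where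
`M_λ = H ⊖ clos{g : (λG+F₀)^{1/2} g ∈ ran G^{1/2}}` and
`N = H ⊖ clos{g : F₀^{1/2} g ∈ ran G^{1/2}}`. -/
theorem stmt11 (G F₀ Sl Sf0 Sg Pl Pn : H →L[ℂ] H)
    (hG : G.IsPositive) (hF₀ : F₀.IsPositive)
    (lam : ℝ) (hlam : 0 < lam)
    (hSl : IsSqrtOf Sl ((lam : ℂ) • G + F₀))
    (hSf0 : IsSqrtOf Sf0 F₀) (hSg : IsSqrtOf Sg G)
    (Ωl : Submodule ℂ H) (hΩl : (Ωl : Set H) = closure {g : H | Sl g ∈ Set.range ⇑Sg})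
    (ΩN : Submodule ℂ H) (hΩN : (ΩN : Set H) = closure {g : H | Sf0 g ∈ Set.range ⇑Sg})
    (hPl : IsOrthProjOnto Ωlᗮ Pl) (hPn : IsOrthProjOnto ΩNᗮ Pn) :
    Sl * Pl * Sl = Sf0 * Pn * Sf0 :=
  stmt11_general G F₀ Sl Sf0 Sg Pl Pn lam hlam hSl hSf0 hSg Ωl hΩl ΩN hΩN hPl hPn
end
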